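/- arXiv:math/0204098 — 7 statements merged into one kernel-verified Lean document; each statement's English description precedes it below -/
import Mathlib

section
/- Let m ≥ 1 be an integer, p a real polynomial, and a a real number. Then for every real x, V_m((X − a)·p)(x) = ((x − a)² − m²)·V_m(p)(x) + V_{m−1}(p)(x), where (X − a)·p denotes the polynomial x ↦ (x − a)p(x). -/
/-- `V m f x = ∑_{j=-m}^{m} (-1)^j f(x-j) f(x+j) / ((m-j)! (m+j)!)`. -/
noncomputable def V (m : ℕ) (f : ℝ → ℝ) (x : ℝ) : ℝ :=
  ∑ j ∈ Finset.Icc (-(m : ℤ)) (m : ℤ),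
    (-1 : ℝ) ^ j * f (x - (j : ℝ)) * f (x + (j : ℝ)) /
      ((((m : ℤ) - j).toNat.factorial : ℝ) * (((m : ℤ) + j).toNat.factorial : ℝ))

/-! Multiplying `f` by `y - a` multiplies the `j`-th summand of `V m f x` by
`(x - j - a)(x + j - a) = ((x - a)² - m²) + (m - j)(m + j)`. The first part gives
`((x - a)² - m²) V m f x`. In the second part the factor `(m - j)(m + j)` kills the boundary
terms `j = ±m` and cancels against the factorials elsewhere, `(m ∓ j)! = (m ∓ j) (m - 1 ∓ j)!`,
which leaves exactly the summands of `V (m - 1) f x`. -/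

open Finset

theorem Int.cast_toNat_factorial_of_pos {R : Type*} [Ring R] {u : ℤ} (hu : 0 < u) :
    ((u.toNat).factorial : R) = u * ((u - 1).toNat).factorial := by
  obtain ⟨n, rfl⟩ : ∃ n : ℕ, u = n + 1 := ⟨(u - 1).toNat, by omega⟩
  simp [Nat.factorial_succ]

namespace V

noncomputable def term (m : ℕ) (f : ℝ → ℝ) (x : ℝ) (j : ℤ) : ℝ :=
  (-1 : ℝ) ^ j * f (x - (j : ℝ)) * f (x + (j : ℝ)) /
    ((((m : ℤ) - j).toNat.factorial : ℝ) * (((m : ℤ) + j).toNat.factorial : ℝ))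

theorem eq_sum_term (m : ℕ) (f : ℝ → ℝ) (x : ℝ) :
    V m f x = ∑ j ∈ Icc (-(m : ℤ)) m, term m f x j := rfl

theorem term_sub_mul (m : ℕ) (f : ℝ → ℝ) (a x : ℝ) (j : ℤ) :
    term m (fun y => (y - a) * f y) x j = ((x - a) ^ 2 - (j : ℝ) ^ 2) * term m f x j := by
  unfold term
  ring

theorem sub_sq_mul_term_succ (n : ℕ) (f : ℝ → ℝ) (x : ℝ) {j : ℤ}
    (hj : j ∈ Icc (-(n : ℤ)) n) :
    (((n : ℝ) + 1) ^ 2 - (j : ℝ) ^ 2) * term (n + 1) f x j = term n f x j := by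
  rw [mem_Icc] at hj
  have hj_le : (j : ℝ) ≤ n := by exact_mod_cast hj.2
  have hj_ge : -(n : ℝ) ≤ j := by exact_mod_cast hj.1
  have hsub : ((((n + 1 : ℕ) : ℤ) - j).toNat.factorial : ℝ) =
      ((n : ℝ) + 1 - j) * ((n : ℤ) - j).toNat.factorial := by
    rw [Int.cast_toNat_factorial_of_pos (by omega)]
    push_cast
    ring_nf
  have hadd : ((((n + 1 : ℕ) : ℤ) + j).toNat.factorial : ℝ) =
      ((n : ℝ) + 1 + j) * ((n : ℤ) + j).toNat.factorial := by
    rw [Int.cast_toNat_factorial_of_pos (by omega)]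
    push_cast
    ring_nf
  have hsub_ne : (n : ℝ) + 1 - j ≠ 0 := by linarith
  have hadd_ne : (n : ℝ) + 1 + j ≠ 0 := by linarith
  unfold term
  rw [hsub, hadd]
  field_simp
  ring

theorem sum_sub_sq_mul_term_succ (n : ℕ) (f : ℝ → ℝ) (x : ℝ) :
    ∑ j ∈ Icc (-((n + 1 : ℕ) : ℤ)) (n + 1 : ℕ),
      (((n : ℝ) + 1) ^ 2 - (j : ℝ) ^ 2) * term (n + 1) f x j = V n f x := by
  symm
  calc V n f x
      = ∑ j ∈ Icc (-(n : ℤ)) n, (((n : ℝ) + 1) ^ 2 - (j : ℝ) ^ 2) * term (n + 1) f x j :=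
        sum_congr rfl fun j hj => (sub_sq_mul_term_succ n f x hj).symm
    _ = _ := by
      refine sum_subset (Icc_subset_Icc (by omega) (by omega)) fun j hj hj' => ?_
      rw [mem_Icc] at hj hj'
      have hj_sq : j ^ 2 = ((n : ℤ) + 1) ^ 2 := by
        rcases (by omega : j = n + 1 ∨ j = -(n + 1)) with rfl | rfl <;> ring
      have hj_sq' : (j : ℝ) ^ 2 = ((n : ℝ) + 1) ^ 2 := by exact_mod_cast hj_sq
      rw [hj_sq', sub_self, zero_mul]

theorem succ_sub_mul (n : ℕ) (f : ℝ → ℝ) (a x : ℝ) :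
    V (n + 1) (fun y => (y - a) * f y) x =
      ((x - a) ^ 2 - ((n : ℝ) + 1) ^ 2) * V (n + 1) f x + V n f x := by
  rw [eq_sum_term, eq_sum_term, ← sum_sub_sq_mul_term_succ, mul_sum, ← sum_add_distrib]
  refine sum_congr rfl fun j _ => ?_
  rw [term_sub_mul]
  ring

end V

theorem stmt_6 (m : ℕ) (hm : 1 ≤ m) (p : Polynomial ℝ) (a : ℝ) (x : ℝ) :
    V m (fun y => (y - a) * p.eval y) x =
      ((x - a) ^ 2 - (m : ℝ) ^ 2) * V m (fun y => p.eval y) x +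
        V (m - 1) (fun y => p.eval y) x := by
  obtain ⟨n, rfl⟩ := Nat.exists_eq_add_of_le' hm
  rw [Nat.add_sub_cancel, Nat.cast_add_one]
  exact V.succ_sub_mul n (fun y => p.eval y) a x
end

section
/- Let m and k be nonnegative integers with k < m, and let p(x) = Π_{i=1}^{k} (x − a_i) be a monic real polynomial of degree k (with real numbers a_1, ..., a_k). Then V_m(p)(x) = 0 for every real x. -/
open Polynomial Finset
open scoped fwdDiff

private lemma fwdDiff_iter_zero_fun (n : ℕ) :
    (fwdDiff (1:ℝ))^[n] (fun _ : ℝ => (0:ℝ)) = fun _ => 0 := by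
  induction n with
  | zero => rfl
  | succ n ih =>
    rw [Function.iterate_succ_apply]
    have h0 : Δ_[(1:ℝ)] (fun _ : ℝ => (0:ℝ)) = fun _ => (0:ℝ) := by
      funext t; simp [fwdDiff]
    rw [h0, ih]

private lemma fwdDiff_eval (P : ℝ[X]) :
    Δ_[(1:ℝ)] (fun t => P.eval t) = fun t => (P.comp (X + C 1) - P).eval t := by
  funext t; simp [fwdDiff, eval_comp, add_comm]

private lemma natDegree_comp_sub_lt (P : ℝ[X]) (h : P.natDegree ≠ 0) :
    (P.comp (X + C 1) - P).natDegree < P.natDegree := by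
  have hP0 : P ≠ 0 := fun h0 => h (by simp [h0])
  have hq : (X + C (1:ℝ)).natDegree = 1 := natDegree_X_add_C 1
  have hdeg : (P.comp (X + C 1)).natDegree = P.natDegree := by
    rw [natDegree_comp, hq, mul_one]
  have hlc : (P.comp (X + C 1)).leadingCoeff = P.leadingCoeff := by
    rw [leadingCoeff_comp (by rw [hq]; exact one_ne_zero),
      (monic_X_add_C (1:ℝ)).leadingCoeff, one_pow, mul_one]
  by_cases h0 : P.comp (X + C 1) - P = 0
  · rw [h0]; simpa [pos_iff_ne_zero] using h
  · have hcomp0 : P.comp (X + C 1) ≠ 0 := by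
      intro hc
      rw [hc, natDegree_zero] at hdeg
      exact h hdeg.symm
    have hdegdeg : (P.comp (X + C 1)).degree = P.degree := by
      rw [degree_eq_natDegree hcomp0, degree_eq_natDegree hP0, hdeg]
    have hlt := degree_sub_lt hdegdeg hcomp0 hlc
    rw [hdegdeg] at hlt
    exact natDegree_lt_natDegree h0 hlt

private lemma fwdDiff_iter_poly (n : ℕ) (P : ℝ[X]) (h : P.natDegree < n) :
    (fwdDiff (1:ℝ))^[n] (fun t => P.eval t) = fun _ => 0 := by
  induction n generalizing P with
  | zero => omega
  | succ n ih =>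
    rw [Function.iterate_succ_apply, fwdDiff_eval]
    by_cases h0 : P.natDegree = 0
    · obtain ⟨c, rfl⟩ := natDegree_eq_zero.mp h0
      have hc : (C c).comp (X + C 1) - C c = 0 := by simp
      rw [hc]
      simpa using fwdDiff_iter_zero_fun n
    · exact ih _ (by have := natDegree_comp_sub_lt P h0; omega)

private lemma Icc_eq_map (m : ℕ) :
    Finset.Icc (-(m : ℤ)) (m : ℤ) =
      (Finset.range (2 * m + 1)).map
        ⟨fun k : ℕ => (k : ℤ) - m, show Function.Injective _ from fun a b h => by simpa using h⟩ := by
  ext j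
  simp only [Finset.mem_Icc, Finset.mem_map, Finset.mem_range, Function.Embedding.coeFn_mk]
  constructor
  · rintro ⟨h1, h2⟩
    exact ⟨(j + m).toNat, by omega, by omega⟩
  · rintro ⟨k, hk, rfl⟩; omega

theorem stmt_7 (m k : ℕ) (hk : k < m) (a : Fin k → ℝ) (x : ℝ) :
    V m (fun y => ∏ i, (y - a i)) x = 0 := by
  set p : ℝ → ℝ := fun y => ∏ i, (y - a i) with hp
  set g : ℝ → ℝ := fun t => p (x + m - t) * p (x - m + t) with hg
  -- g is given by a polynomial of degree ≤ 2k
  set P : ℝ[X] := ((∏ i, (X - C (a i))).comp (C (x + m) - X)) *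
      ((∏ i, (X - C (a i))).comp (C (x - m) + X)) with hP
  have hgP : ∀ t : ℝ, g t = P.eval t := by
    intro t
    simp only [hP, hg, hp, eval_mul, eval_comp, eval_sub, eval_add, eval_C, eval_X,
      eval_prod]
  have hPdeg : P.natDegree < 2 * m := by
    have h1 : (∏ i, (X - C (a i)) : ℝ[X]).natDegree = k := by
      simpa using natDegree_prod_of_monic Finset.univ (fun i => X - C (a i))
        (fun i _ => monic_X_sub_C (a i))
    have h2 : (C (x + (m:ℝ)) - X : ℝ[X]).natDegree = 1 := by
      rw [show (C (x + (m:ℝ)) - X : ℝ[X]) = -(X - C (x + m)) by ring, natDegree_neg,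
        natDegree_X_sub_C]
    have h3 : (C (x - (m:ℝ)) + X : ℝ[X]).natDegree = 1 := by
      rw [add_comm, natDegree_X_add_C]
    have hb1 : ((∏ i, (X - C (a i)) : ℝ[X]).comp (C (x + (m:ℝ)) - X)).natDegree ≤ k :=
      natDegree_comp.le.trans (by rw [h1, h2, mul_one])
    have hb2 : ((∏ i, (X - C (a i)) : ℝ[X]).comp (C (x - (m:ℝ)) + X)).natDegree ≤ k :=
      natDegree_comp.le.trans (by rw [h1, h3, mul_one])
    calc P.natDegree ≤ _ + _ := natDegree_mul_le
      _ ≤ k + k := add_le_add hb1 hb2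
      _ < 2 * m := by omega
  -- the iterated difference of g vanishes
  have hdiff : (fwdDiff (1:ℝ))^[2 * m] g 0 = 0 := by
    have hgf : g = fun t => P.eval t := funext hgP
    rw [hgf, fwdDiff_iter_poly (2 * m) P hPdeg]
  rw [fwdDiff_iter_eq_sum_shift] at hdiff
  -- rewrite V as a multiple of this sum
  have key : V m p x = ((-1 : ℝ) ^ m / (2 * m).factorial) *
      ∑ j ∈ Finset.range (2 * m + 1),
        ((-1 : ℤ) ^ (2 * m - j) * (2 * m).choose j) • g ((0:ℝ) + j • (1:ℝ)) := by
    rw [V, Icc_eq_map m, Finset.sum_map, Finset.mul_sum]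
    refine Finset.sum_congr rfl fun j hj => ?_
    rw [Finset.mem_range] at hj
    simp only [Function.Embedding.coeFn_mk]
    have hmj1 : ((m : ℤ) - ((j : ℤ) - m)).toNat = 2 * m - j := by omega
    have hmj2 : ((m : ℤ) + ((j : ℤ) - m)).toNat = j := by omega
    rw [hmj1, hmj2]
    have hpow : (-1 : ℝ) ^ ((j : ℤ) - (m : ℤ)) = (-1 : ℝ) ^ j * (-1 : ℝ) ^ m := by
      have h1 : (-1 : ℝ) ^ ((j : ℤ) - (m : ℤ)) * (-1 : ℝ) ^ ((m : ℤ)) = (-1 : ℝ) ^ ((j : ℤ)) := by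
        rw [← zpow_add₀ (by norm_num : (-1:ℝ) ≠ 0)]; ring_nf
      rw [zpow_natCast, zpow_natCast] at h1
      have hm : (-1 : ℝ) ^ m * (-1 : ℝ) ^ m = 1 := by
        rw [← pow_add, ← two_mul, pow_mul]; norm_num
      linear_combination ((-1:ℝ)^m) * h1 - ((-1:ℝ) ^ ((j : ℤ) - (m : ℤ))) * hm
    have hpow2 : (((-1 : ℤ) ^ (2 * m - j) : ℤ) : ℝ) = (-1 : ℝ) ^ j := by
      push_cast
      rw [show (2 * m : ℕ) - j = 2 * m - j by rfl]
      have : (-1 : ℝ) ^ (2*m - j) * (-1:ℝ) ^ j = 1 := by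
        rw [← pow_add, show 2*m - j + j = 2*m by omega, pow_mul]; norm_num
      have hj2 : (-1:ℝ) ^ j * (-1:ℝ)^j = 1 := by
        rw [← pow_add, ← two_mul, pow_mul]; norm_num
      exact mul_right_cancel₀ (pow_ne_zero j (by norm_num : (-1:ℝ) ≠ 0))
        (by rw [this, hj2])
    have hchoose : (((2 * m).choose j : ℝ)) =
        (2 * m).factorial / (j.factorial * (2 * m - j).factorial) :=
      Nat.cast_choose ℝ (by omega)
    have hgj : g ((0:ℝ) + (j:ℕ) • (1:ℝ)) = p (x - ((j:ℤ) - m)) * p (x + ((j:ℤ) - m)) := by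
      simp only [hg, zero_add, nsmul_eq_mul, mul_one]
      push_cast
      ring_nf
    rw [zsmul_eq_mul, hgj]
    push_cast [hpow, hpow2, hchoose]
    have hx1 : (j.factorial : ℝ) ≠ 0 := Nat.cast_ne_zero.mpr (Nat.factorial_ne_zero j)
    have hx2 : ((2 * m - j).factorial : ℝ) ≠ 0 :=
      Nat.cast_ne_zero.mpr (Nat.factorial_ne_zero _)
    have hx3 : ((2 * m).factorial : ℝ) ≠ 0 := Nat.cast_ne_zero.mpr (Nat.factorial_ne_zero _)
    field_simp
  rw [key, hdiff, mul_zero]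
end

section
/- Let m be a nonnegative integer and let p(x) = Π_{i=1}^{m+1} (x − a_i) be a monic real polynomial of degree m + 1 (with real numbers a_1, ..., a_{m+1}). Then for every real x, V_m(p)(x) = (m+1)·x² − 2x·Σ_{i=1}^{m+1} a_i + Σ_{i=1}^{m+1} a_i² − (1/4)·C(2m+2, 3), where C(2m+2,3) denotes the binomial coefficient (2m+2 choose 3). -/
open Finset fwdDiff

noncomputable def K (m d : ℕ) : ℝ := (fwdDiff (1:ℝ))^[2*m] (fun u : ℝ => u ^ d) (-(m:ℝ))

lemma iter_shift (n : ℕ) (F : ℝ → ℝ) (y : ℝ) :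
    (fwdDiff (1:ℝ))^[n] (fun u => F (u + 1)) y = (fwdDiff (1:ℝ))^[n] F (y + 1) := by
  induction n generalizing F y with
  | zero => simp
  | succ n ih =>
      rw [Function.iterate_succ_apply, Function.iterate_succ_apply]
      have : fwdDiff (1:ℝ) (fun u => F (u + 1)) = fun u => (fwdDiff (1:ℝ) F) (u + 1) := by
        funext u; simp [fwdDiff]
      rw [this, ih]

lemma iter_zero_fun (n : ℕ) (y : ℝ) : (fwdDiff (1:ℝ))^[n] (fun _ : ℝ => (0:ℝ)) y = 0 := by
  induction n generalizing y with
  | zero => simp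
  | succ n ih =>
      rw [Function.iterate_succ_apply]
      have : fwdDiff (1:ℝ) (fun _ : ℝ => (0:ℝ)) = fun _ : ℝ => (0:ℝ) := by funext u; simp [fwdDiff]
      rw [this, ih]

lemma rec_step (m : ℕ) (F : ℝ → ℝ) :
    (fwdDiff (1:ℝ))^[2*(m+1)] F (-((m:ℝ)+1)) =
      (fwdDiff (1:ℝ))^[2*m] (fun v => F (v+1) - 2 * F v + F (v-1)) (-(m:ℝ)) := by
  have h2 : 2*(m+1) = (2*m) + 1 + 1 := by ring
  rw [h2, Function.iterate_succ_apply, Function.iterate_succ_apply]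
  have : fwdDiff (1:ℝ) (fwdDiff (1:ℝ) F) = fun u => (fun v => F (v+1) - 2 * F v + F (v-1)) (u + 1) := by
    funext u; simp only [fwdDiff]; ring_nf
  rw [this, iter_shift (2*m) (fun v => F (v+1) - 2 * F v + F (v-1)) (-((m:ℝ)+1))]
  norm_num

lemma iter_sum {ι : Type*} (n : ℕ) (s : Finset ι) (c : ι → ℝ) (d : ι → ℕ) (y : ℝ) :
    (fwdDiff (1:ℝ))^[n] (fun v : ℝ => ∑ l ∈ s, c l * v ^ (d l)) y
      = ∑ l ∈ s, c l * ((fwdDiff (1:ℝ))^[n] (fun v : ℝ => v ^ (d l)) y) := by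
  have h : (fun v : ℝ => ∑ l ∈ s, c l * v ^ (d l))
      = ∑ l ∈ s, c l • (fun v : ℝ => v ^ (d l)) := by
    funext v; simp [Finset.sum_apply]
  rw [h, fwdDiff_iter_finset_sum]
  simp only [fwdDiff_iter_const_smul]
  simp [Finset.sum_apply]

lemma pow_diff_expand (e : ℕ) (v : ℝ) :
    (v+1)^(e+1) - 2*v^(e+1) + (v-1)^(e+1)
      = ∑ l ∈ range e, (((e+1).choose l : ℝ) * (1 + (-1:ℝ)^(e+1-l))) * v^l := by
  have h1 : (v+1)^(e+1) = ∑ l ∈ range (e+2), v^l * 1^(e+1-l) * ((e+1).choose l : ℝ) :=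
    add_pow v 1 (e+1)
  have h2 : (v-1)^(e+1) = ∑ l ∈ range (e+2), v^l * (-1)^(e+1-l) * ((e+1).choose l : ℝ) := by
    have := add_pow v (-1 : ℝ) (e+1)
    simpa [sub_eq_add_neg] using this
  have hAB : (∑ l ∈ range (e+2), v^l * 1^(e+1-l) * ((e+1).choose l : ℝ))
      + (∑ l ∈ range (e+2), v^l * (-1)^(e+1-l) * ((e+1).choose l : ℝ))
      = 2*v^(e+1) + ∑ l ∈ range e, (((e+1).choose l : ℝ) * (1 + (-1:ℝ)^(e+1-l))) * v^l := by
    rw [← Finset.sum_add_distrib, Finset.sum_range_succ, Finset.sum_range_succ]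
    have he1 : e + 1 - (e+1) = 0 := by omega
    have he2 : e + 1 - e = 1 := by omega
    rw [he1, he2]
    simp only [Nat.choose_self, pow_zero, pow_one, Nat.cast_one]
    have : ∑ l ∈ range e, (v ^ l * 1 ^ (e + 1 - l) * ((e+1).choose l : ℝ)
          + v ^ l * (-1) ^ (e + 1 - l) * ((e+1).choose l : ℝ))
        = ∑ l ∈ range e, (((e+1).choose l : ℝ) * (1 + (-1:ℝ)^(e+1-l))) * v^l := by
      refine Finset.sum_congr rfl fun l hl => ?_
      rw [one_pow]; ring
    rw [this]; ring
  linarith [hAB, h1, h2]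

lemma K_rec (m e : ℕ) :
    K (m+1) (e+1) = ∑ l ∈ range e, (((e+1).choose l : ℝ) * (1 + (-1:ℝ)^(e+1-l))) * K m l := by
  unfold K
  have hc : (-(((m+1):ℕ):ℝ)) = -((m:ℝ)+1) := by push_cast; ring
  rw [hc, rec_step]
  have hfun : (fun v : ℝ => (fun u : ℝ => u ^ (e+1)) (v+1) - 2 * (fun u : ℝ => u ^ (e+1)) v
        + (fun u : ℝ => u ^ (e+1)) (v-1))
      = fun v : ℝ => ∑ l ∈ range e, (((e+1).choose l : ℝ) * (1 + (-1:ℝ)^(e+1-l))) * v^l := by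
    funext v
    exact pow_diff_expand e v
  rw [hfun, iter_sum _ _ _ (fun l => l)]

lemma K_d0 (m : ℕ) : K (m+1) 0 = 0 := by
  unfold K
  have h2 : 2*(m+1) = (2*m+1) + 1 := by ring
  rw [h2, Function.iterate_succ_apply]
  have : fwdDiff (1:ℝ) (fun u : ℝ => u ^ 0) = fun _ : ℝ => (0:ℝ) := by
    funext u; simp [fwdDiff]
  rw [this, iter_zero_fun]

lemma K_vanish : ∀ m d, d < 2*m → K m d = 0 := by
  intro m
  induction m with
  | zero => intro d hd; omega
  | succ m ih =>
      intro d hd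
      match d with
      | 0 => exact K_d0 m
      | (e+1) =>
          rw [K_rec]
          refine Finset.sum_eq_zero fun l hl => ?_
          rw [ih l (by simp at hl; omega), mul_zero]

lemma K_main : ∀ m, K m (2*m) = ((2*m).factorial : ℝ) := by
  intro m
  induction m with
  | zero => simp [K]
  | succ m ih =>
      have h2 : 2*(m+1) = (2*m+1) + 1 := by ring
      rw [h2, K_rec, Finset.sum_range_succ]
      have hz : ∑ l ∈ range (2*m), (((2*m+1+1).choose l : ℝ) * (1 + (-1:ℝ)^(2*m+1+1-l))) * K m l = 0 := by
        refine Finset.sum_eq_zero fun l hl => ?_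
        rw [K_vanish m l (by simp at hl; omega), mul_zero]
      rw [hz, zero_add, ih]
      have hsub : 2*m+1+1 - 2*m = 2 := by omega
      rw [hsub]
      have hch : ((2*m+2).choose (2*m) : ℝ) * 2 * ((2*m).factorial : ℝ) = ((2*m+2).factorial : ℝ) := by
        have := Nat.choose_mul_factorial_mul_factorial (n := 2*m+2) (k := 2*m) (by omega)
        have h1 : (2*m+2 - (2*m)) = 2 := by omega
        rw [h1] at this
        have : ((2*m+2).choose (2*m) * (2*m).factorial * Nat.factorial 2 : ℕ) = ((2*m+2).factorial : ℕ) := by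
          exact this
        calc ((2*m+2).choose (2*m) : ℝ) * 2 * ((2*m).factorial : ℝ)
            = (((2*m+2).choose (2*m) * (2*m).factorial * Nat.factorial 2 : ℕ) : ℝ) := by
              push_cast [Nat.factorial]; ring
          _ = ((2*m+2).factorial : ℝ) := by rw [this]
      have : (2*m+1+1 : ℕ) = 2*m+2 := by omega
      rw [this]
      push_cast at hch ⊢
      nlinarith [hch]

noncomputable def sigma (m : ℕ) : ℝ := (m:ℝ) * ((m:ℝ)+1) * (2*(m:ℝ)+1) / 6

lemma fact_cast_succ (n : ℕ) : ((n+1).factorial : ℝ) = ((n:ℝ)+1) * (n.factorial : ℝ) := by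
  rw [Nat.factorial_succ]; push_cast; ring

lemma K_top : ∀ m, K m (2*m+2) = ((2*m).factorial : ℝ) * sigma m := by
  intro m
  induction m with
  | zero => simp [K, sigma]
  | succ m ih =>
      have h2 : 2*(m+1)+2 = (2*m+3) + 1 := by ring
      rw [h2, K_rec, Finset.sum_range_succ, Finset.sum_range_succ, Finset.sum_range_succ]
      have hz : ∑ l ∈ range (2*m), (((2*m+3+1).choose l : ℝ) * (1 + (-1:ℝ)^(2*m+3+1-l))) * K m l = 0 := by
        refine Finset.sum_eq_zero fun l hl => ?_
        rw [K_vanish m l (by simp at hl; omega), mul_zero]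
      rw [hz, zero_add]
      have e1 : 2*m+3+1 - (2*m) = 4 := by omega
      have e2 : 2*m+3+1 - (2*m+1) = 3 := by omega
      have e3 : 2*m+3+1 - (2*m+2) = 2 := by omega
      rw [e1, e2, e3, ih, K_main m]
      have hodd : (1 + (-1:ℝ)^3) = 0 := by norm_num
      rw [hodd]
      set F : ℝ := ((2*m).factorial : ℝ) with hF
      have hFne : F ≠ 0 := by positivity
      have hf1 : ((2*m+1).factorial : ℝ) = (2*(m:ℝ)+1) * F := by
        rw [hF]; rw [show 2*m+1 = (2*m)+1 from rfl, fact_cast_succ]; push_cast; ring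
      have hf2 : ((2*m+2).factorial : ℝ) = (2*(m:ℝ)+2)*(2*(m:ℝ)+1) * F := by
        rw [show 2*m+2 = (2*m+1)+1 from rfl, fact_cast_succ, hf1]; push_cast; ring
      have hf3 : ((2*m+3).factorial : ℝ) = (2*(m:ℝ)+3)*(2*(m:ℝ)+2)*(2*(m:ℝ)+1) * F := by
        rw [show 2*m+3 = (2*m+2)+1 from rfl, fact_cast_succ, hf2]; push_cast; ring
      have hf4 : ((2*m+4).factorial : ℝ) = (2*(m:ℝ)+4)*(2*(m:ℝ)+3)*(2*(m:ℝ)+2)*(2*(m:ℝ)+1) * F := by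
        rw [show 2*m+4 = (2*m+3)+1 from rfl, fact_cast_succ, hf3]; push_cast; ring
      have h4 : (2*m+3+1) = 2*m+4 := by omega
      rw [h4]
      have hC1 : (((2*m+4).choose (2*m+2)) : ℝ) = (2*(m:ℝ)+4)*(2*(m:ℝ)+3)/2 := by
        have h := Nat.choose_mul_factorial_mul_factorial (n := 2*m+4) (k := 2*m+2) (by omega)
        have hs : 2*m+4 - (2*m+2) = 2 := by omega
        rw [hs] at h
        have hr : (((2*m+4).choose (2*m+2)) : ℝ) * ((2*m+2).factorial : ℝ) * 2 = ((2*m+4).factorial : ℝ) := by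
          calc (((2*m+4).choose (2*m+2)) : ℝ) * ((2*m+2).factorial : ℝ) * 2
              = (((2*m+4).choose (2*m+2) * (2*m+2).factorial * Nat.factorial 2 : ℕ) : ℝ) := by
                push_cast [Nat.factorial]; ring
            _ = _ := by rw [h]
        rw [hf2, hf4] at hr
        have hprod : ((2*(m:ℝ)+2)*(2*(m:ℝ)+1)*F) ≠ 0 := by positivity
        have hcc : (((2*m+4).choose (2*m+2)):ℝ) * 2 = (2*(m:ℝ)+4)*(2*(m:ℝ)+3) := by
          apply mul_right_cancel₀ hprod
          linear_combination hr
        linarith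
      have hC2 : (((2*m+4).choose (2*m)) : ℝ)
          = (2*(m:ℝ)+4)*(2*(m:ℝ)+3)*(2*(m:ℝ)+2)*(2*(m:ℝ)+1)/24 := by
        have h := Nat.choose_mul_factorial_mul_factorial (n := 2*m+4) (k := 2*m) (by omega)
        have hs : 2*m+4 - (2*m) = 4 := by omega
        rw [hs] at h
        have hr : (((2*m+4).choose (2*m)) : ℝ) * F * 24 = ((2*m+4).factorial : ℝ) := by
          calc (((2*m+4).choose (2*m)) : ℝ) * F * 24
              = (((2*m+4).choose (2*m) * (2*m).factorial * Nat.factorial 4 : ℕ) : ℝ) := by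
                push_cast [Nat.factorial]; ring
            _ = _ := by rw [h]
        rw [hf4] at hr
        have hcc : (((2*m+4).choose (2*m)):ℝ) * 24
            = (2*(m:ℝ)+4)*(2*(m:ℝ)+3)*(2*(m:ℝ)+2)*(2*(m:ℝ)+1) := by
          apply mul_right_cancel₀ hFne
          linear_combination hr
        linarith
      rw [hC1, hC2, show 2*(m+1) = 2*m+2 from by ring, hf2]
      simp only [sigma]
      push_cast
      ring

lemma conn (m : ℕ) (F : ℝ → ℝ) :
    ∑ j ∈ Finset.Icc (-(m : ℤ)) (m : ℤ),
        (-1 : ℝ) ^ j * F (j : ℝ) /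
          ((((m : ℤ) - j).toNat.factorial : ℝ) * (((m : ℤ) + j).toNat.factorial : ℝ))
      = (-1:ℝ)^m * ((fwdDiff (1:ℝ))^[2*m] F (-(m:ℝ))) / ((2*m).factorial : ℝ) := by
  rw [fwdDiff_iter_eq_sum_shift, Finset.mul_sum, Finset.sum_div]
  refine Finset.sum_nbij' (fun j => ((m:ℤ) + j).toNat) (fun k => (k : ℤ) - m) ?_ ?_ ?_ ?_ ?_
  · intro j hj
    simp only [Finset.mem_Icc] at hj
    simp only [Finset.mem_range]
    omega
  · intro k hk
    simp only [Finset.mem_range] at hk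
    simp only [Finset.mem_Icc]
    omega
  · intro j hj; simp only [Finset.mem_Icc] at hj
    show ((((m:ℤ) + j).toNat : ℤ) - m) = j
    omega
  · intro k hk; simp only [Finset.mem_range] at hk
    show ((m:ℤ) + ((k:ℤ) - m)).toNat = k
    omega
  · intro j hj
    simp only [Finset.mem_Icc] at hj
    show (-1 : ℝ) ^ j * F (j : ℝ) /
          ((((m : ℤ) - j).toNat.factorial : ℝ) * (((m : ℤ) + j).toNat.factorial : ℝ))
        = (-1:ℝ)^m * (((-1:ℤ) ^ (2*m - ((m:ℤ)+j).toNat) * ((2*m).choose (((m:ℤ)+j).toNat) : ℤ))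
            • F (-(m:ℝ) + (((m:ℤ)+j).toNat) • (1:ℝ))) / ((2*m).factorial : ℝ)
    set k : ℕ := ((m:ℤ) + j).toNat with hkdef
    have hk : (k : ℤ) = (m:ℤ) + j := by omega
    have hkle : k ≤ 2*m := by omega
    have ht1 : ((m:ℤ) - j).toNat = 2*m - k := by omega
    have harg : -(m:ℝ) + k • (1:ℝ) = (j : ℝ) := by
      have : (k : ℝ) = (m:ℝ) + (j:ℝ) := by exact_mod_cast congrArg (fun z : ℤ => (z : ℝ)) hk
      simp only [nsmul_eq_mul, mul_one]
      linarith
    have hsign : ((-1:ℝ) ^ j) = (-1:ℝ)^k * (-1:ℝ)^m := by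
      have hj' : j = (k : ℤ) - (m : ℤ) := by omega
      have hinv : ((-1:ℝ)^m)⁻¹ = (-1:ℝ)^m := by
        rw [← inv_pow, inv_neg, inv_one]
      rw [hj', zpow_sub₀ (by norm_num : (-1:ℝ) ≠ 0), zpow_natCast, zpow_natCast,
        div_eq_mul_inv, hinv]
    have hs3 : (-1:ℝ)^(2*m - k) = (-1:ℝ)^k := by
      rcases Nat.even_or_odd k with he | ho
      · rw [Even.neg_one_pow he, Even.neg_one_pow ((Nat.even_sub hkle).mpr (iff_of_true (even_two_mul m) he))]
      · rw [Odd.neg_one_pow ho, Odd.neg_one_pow (Nat.Even.sub_odd hkle (even_two_mul m) ho)]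
    have hfac : (((2*m).choose k : ℝ) * (k.factorial : ℝ) * ((2*m - k).factorial : ℝ))
        = ((2*m).factorial : ℝ) := by
      exact_mod_cast congrArg (fun n : ℕ => (n:ℝ)) (Nat.choose_mul_factorial_mul_factorial hkle)
    rw [ht1, harg, hsign]
    simp only [zsmul_eq_mul]
    push_cast
    rw [hs3]
    have p1 : ((2*m - k).factorial : ℝ) > 0 := by positivity
    have p2 : ((k).factorial : ℝ) > 0 := by positivity
    have p3 : ((2*m).factorial : ℝ) > 0 := by positivity
    field_simp
    linear_combination (-(F (j:ℝ))) * hfac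

lemma prod_expand (m : ℕ) (b : Fin (m+1) → ℝ) (u : ℝ) :
    (∏ i, (b i - u^2)) = ∑ t ∈ (Finset.univ : Finset (Fin (m+1))).powerset,
      ((∏ i ∈ t, b i) * (-1:ℝ)^(m+1-t.card)) * u^(2*(m+1-t.card)) := by
  have h := Finset.prod_add b (fun _ => -u^2) (Finset.univ : Finset (Fin (m+1)))
  have h1 : (∏ i, (b i - u^2)) = ∏ i, (b i + (-u^2)) := by
    refine Finset.prod_congr rfl fun i _ => by ring
  rw [h1, h]
  refine Finset.sum_congr rfl fun t ht => ?_
  have hsub : t ⊆ Finset.univ := Finset.mem_powerset.mp ht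
  have hcard : (Finset.univ \ t).card = m+1 - t.card := by
    rw [Finset.card_sdiff_of_subset hsub]
    simp
  rw [Finset.prod_const, hcard]
  rw [show (-u^2 : ℝ) = (-1) * u^2 from by ring, mul_pow, ← pow_mul]
  ring

noncomputable def bb (m : ℕ) (a : Fin (m+1) → ℝ) (x : ℝ) : Fin (m+1) → ℝ := fun i => (x - a i)^2

lemma choose3_cast (m : ℕ) : (((2*m+2).choose 3 : ℕ) : ℝ)
    = (2*(m:ℝ)) * (2*(m:ℝ)+1) * (2*(m:ℝ)+2) / 6 := by
  have hdvd : (Nat.factorial 3) ∣ (2*m+2).descFactorial 3 := Nat.factorial_dvd_descFactorial _ _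
  have h6 : Nat.factorial 3 = 6 := by decide
  have h1 : (2*m+2).choose 3 * 6 = (2*m+2).descFactorial 3 := by
    rw [Nat.choose_eq_descFactorial_div_factorial, h6]
    rw [h6] at hdvd
    exact Nat.div_mul_cancel hdvd
  have h2 : (2*m+2).descFactorial 3 = (2*m) * ((2*m+1) * ((2*m+2) * 1)) := by
    simp [Nat.descFactorial]
  rw [h2] at h1
  have := congrArg (fun n : ℕ => (n : ℝ)) h1
  push_cast at this
  linarith


theorem stmt_9 (m : ℕ) (a : Fin (m + 1) → ℝ) (x : ℝ) :
    V m (fun y => ∏ i, (y - a i)) x =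
      ((m : ℝ) + 1) * x ^ 2 - 2 * x * (∑ i, a i) + (∑ i, (a i) ^ 2) -
        (1 / 4) * ((2 * m + 2).choose 3 : ℝ) := by
  set b : Fin (m+1) → ℝ := fun i => (x - a i)^2 with hb
  set F : ℝ → ℝ := fun u => ∏ i, (b i - u^2) with hFdef
  have hstep1 : V m (fun y => ∏ i, (y - a i)) x
      = ∑ j ∈ Finset.Icc (-(m : ℤ)) (m : ℤ),
          (-1 : ℝ) ^ j * F (j : ℝ) /
            ((((m : ℤ) - j).toNat.factorial : ℝ) * (((m : ℤ) + j).toNat.factorial : ℝ)) := by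
    unfold V
    refine Finset.sum_congr rfl fun j _ => ?_
    have hprod : (∏ i, ((x - (j:ℝ)) - a i)) * (∏ i, ((x + (j:ℝ)) - a i)) = F (j:ℝ) := by
      rw [hFdef, ← Finset.prod_mul_distrib]
      refine Finset.prod_congr rfl fun i _ => ?_
      rw [hb]; ring
    rw [mul_assoc, hprod]
  rw [hstep1, conn]
  have hFsum : F = fun u : ℝ => ∑ t ∈ (Finset.univ : Finset (Fin (m+1))).powerset,
      ((∏ i ∈ t, b i) * (-1:ℝ)^(m+1-t.card)) * u^(2*(m+1-t.card)) := by
    funext u; exact prod_expand m b u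
  have hdiff : (fwdDiff (1:ℝ))^[2*m] F (-(m:ℝ))
      = ∑ t ∈ (Finset.univ : Finset (Fin (m+1))).powerset,
          ((∏ i ∈ t, b i) * (-1:ℝ)^(m+1-t.card)) * K m (2*(m+1-t.card)) := by
    rw [hFsum, iter_sum]
    exact Finset.sum_congr rfl fun t _ => rfl
  rw [hdiff, Finset.mul_sum, Finset.sum_div]
  -- restrict to small subsets
  set g : Finset (Fin (m+1)) → ℝ := fun t =>
    (-1:ℝ)^m * (((∏ i ∈ t, b i) * (-1:ℝ)^(m+1-t.card)) * K m (2*(m+1-t.card))) / ((2*m).factorial : ℝ)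
    with hg
  have hzero : ∀ t ∈ (Finset.univ : Finset (Fin (m+1))).powerset,
      t ∉ ((Finset.univ : Finset (Fin (m+1))).powerset.filter (fun t => t.card ≤ 1)) → g t = 0 := by
    intro t ht hnt
    have hc2 : 2 ≤ t.card := by
      simp only [Finset.mem_filter] at hnt
      push_neg at hnt
      exact hnt ht
    have hcle : t.card ≤ m+1 := by
      have := Finset.card_le_card (Finset.mem_powerset.mp ht)
      simpa using this
    have : 2*(m+1-t.card) < 2*m := by omega
    rw [hg]
    simp only []
    rw [K_vanish m _ this, mul_zero, mul_zero, zero_div]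
  have hrestrict : ∑ t ∈ (Finset.univ : Finset (Fin (m+1))).powerset, g t
      = ∑ t ∈ (Finset.univ : Finset (Fin (m+1))).powerset.filter (fun t => t.card ≤ 1), g t :=
    (Finset.sum_subset (Finset.filter_subset _ _) hzero).symm
  have hfil : (Finset.univ : Finset (Fin (m+1))).powerset.filter (fun t => t.card ≤ 1)
      = insert (∅ : Finset (Fin (m+1))) (Finset.univ.image fun i : Fin (m+1) => ({i} : Finset (Fin (m+1)))) := by
    ext t
    simp only [Finset.mem_filter, Finset.mem_powerset, Finset.mem_insert, Finset.mem_image,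
      Finset.mem_univ, true_and]
    constructor
    · rintro ⟨-, hc⟩
      interval_cases h : t.card
      · exact Or.inl (Finset.card_eq_zero.mp h)
      · exact Or.inr ((Finset.card_eq_one.mp h).imp fun a ha => ha.symm)
    · rintro (rfl | ⟨i, rfl⟩)
      · exact ⟨Finset.empty_subset _, by simp⟩
      · exact ⟨Finset.subset_univ _, by simp⟩
  have hne : (∅ : Finset (Fin (m+1))) ∉ Finset.univ.image fun i : Fin (m+1) => ({i} : Finset (Fin (m+1))) := by
    simp only [Finset.mem_image, Finset.mem_univ, true_and]
    rintro ⟨i, hi⟩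
    exact (Finset.singleton_ne_empty i) hi
  have hsum : ∑ t ∈ (Finset.univ : Finset (Fin (m+1))).powerset, g t
      = g ∅ + ∑ i, g {i} := by
    rw [hrestrict, hfil, Finset.sum_insert hne,
      Finset.sum_image (fun i _ j _ h => Finset.singleton_injective h)]
  have hgempty : g ∅ = - sigma m := by
    rw [hg]
    simp only [Finset.prod_empty, Finset.card_empty, Nat.sub_zero, one_mul]
    rw [show 2*(m+1) = 2*m+2 from by ring, K_top]
    have hfpos : ((2*m).factorial : ℝ) ≠ 0 := by positivity
    field_simp
    have hsq : (-1:ℝ)^m * (-1)^m = 1 := by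
      rw [← pow_add]; exact Even.neg_one_pow ⟨m, rfl⟩
    rw [pow_succ]
    linear_combination (-sigma m) * hsq
  have hgsing : ∀ i, g {i} = b i := by
    intro i
    rw [hg]
    simp only [Finset.prod_singleton, Finset.card_singleton, Nat.add_sub_cancel]
    rw [K_main]
    have hfpos : ((2*m).factorial : ℝ) ≠ 0 := by positivity
    field_simp
    have hsq : (-1:ℝ)^m * (-1)^m = 1 := by
      rw [← pow_add]; exact Even.neg_one_pow ⟨m, rfl⟩
    linear_combination (b i) * hsq
  rw [hsum, hgempty]
  simp only [hgsing]
  have hbsum : ∑ i, b i = ((m:ℝ)+1) * x^2 - 2*x*(∑ i, a i) + ∑ i, (a i)^2 := by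
    rw [hb]
    have h1 : ∀ i : Fin (m+1), (x - a i)^2 = x^2 - 2*x*(a i) + (a i)^2 := fun i => by ring
    rw [Finset.sum_congr rfl fun i _ => h1 i]
    rw [Finset.sum_add_distrib, Finset.sum_sub_distrib, Finset.sum_const, ← Finset.mul_sum]
    simp only [Finset.card_univ, Fintype.card_fin, nsmul_eq_mul]
    push_cast
    ring
  rw [hbsum, choose3_cast, sigma]
  ring
end

section
/- Let m be a nonnegative integer and let a_1 < a_2 < ... < a_{m+1} be real numbers with a_{i+1} − a_i ≥ √(4 − 6/(m+2)) for i = 1, ..., m. Then 4·(Σ_{i=1}^{m+1} a_i)² − 4(m+1)·Σ_{i=1}^{m+1} a_i² + (m+1)·C(2m+2, 3) ≤ 0, where C(2m+2,3) denotes the binomial coefficient (2m+2 choose 3). -/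
/-!
The gap condition forces `|a j - a i| ≥ δ |j - i|` for all pairs. By Lagrange's identity
`∑ᵢ ∑ⱼ (a j - a i)² = 2 (m + 1) ∑ a i² - 2 (∑ a i)²`, the expression equals
`(m + 1) C(2m+2, 3) - 2 ∑ᵢ ∑ⱼ (a j - a i)²`, and for the equally spaced points `δ i` the double
sum is `δ² (m + 1)² m (m + 2) / 6`, which is exactly `(m + 1) C(2m+2, 3) / 2` because
`δ² = 4 - 6 / (m + 2)`.
-/

open Finset

theorem sum_sum_sub_sq {ι R : Type*} [Fintype ι] [CommRing R] (f : ι → R) :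
    ∑ i, ∑ j, (f j - f i) ^ 2 = 2 * Fintype.card ι * ∑ i, f i ^ 2 - 2 * (∑ i, f i) ^ 2 := by
  simp only [sub_sq, sum_add_distrib, sum_sub_distrib, sum_const, card_univ, nsmul_eq_mul,
    ← sum_mul, ← mul_sum]
  ring

theorem Fin.sum_val_cast (n : ℕ) : ∑ i : Fin n, (i : ℝ) = n * (n - 1) / 2 := by
  induction n with
  | zero => simp
  | succ n ih =>
    rw [Fin.sum_univ_castSucc]
    simp only [Fin.val_castSucc, ih, Fin.val_last]
    push_cast
    ring

theorem Fin.sum_val_cast_sq (n : ℕ) :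
    ∑ i : Fin n, (i : ℝ) ^ 2 = n * (n - 1) * (2 * n - 1) / 6 := by
  induction n with
  | zero => simp
  | succ n ih =>
    rw [Fin.sum_univ_castSucc]
    simp only [Fin.val_castSucc, ih, Fin.val_last]
    push_cast
    ring

theorem Fin.sum_sum_val_sub_sq (n : ℕ) :
    ∑ i : Fin n, ∑ j : Fin n, ((j : ℝ) - i) ^ 2 = (n : ℝ) ^ 2 * (n ^ 2 - 1) / 6 := by
  rw [sum_sum_sub_sq (fun i : Fin n => (i : ℝ)), Fin.sum_val_cast, Fin.sum_val_cast_sq,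
    Fintype.card_fin]
  ring

theorem Nat.cast_choose_three (n : ℕ) : (n.choose 3 : ℝ) = n * (n - 1) * (n - 2) / 6 := by
  cases n with
  | zero => simp
  | succ n =>
    have h := congrArg (Nat.cast (R := ℝ)) (Nat.add_one_mul_choose_eq n 2)
    push_cast [Nat.cast_choose_two] at h ⊢
    linarith

section Gaps

variable {n : ℕ} {a : Fin (n + 1) → ℝ} {δ : ℝ}

theorem monotone_sub_mul_of_le_sub_succ (hgap : ∀ i : Fin n, δ ≤ a i.succ - a i.castSucc) :
    Monotone fun i : Fin (n + 1) => a i - δ * i := by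
  refine Fin.monotone_iff_le_succ.2 fun i => ?_
  have := hgap i
  simp only [Fin.val_castSucc, Fin.val_succ]
  push_cast
  linarith

theorem mul_sub_le_sub_of_le_sub_succ (hgap : ∀ i : Fin n, δ ≤ a i.succ - a i.castSucc)
    {i j : Fin (n + 1)} (hij : i ≤ j) : δ * ((j : ℝ) - i) ≤ a j - a i := by
  have := monotone_sub_mul_of_le_sub_succ hgap hij
  linarith

theorem sq_mul_sub_le_sq_sub_of_le_sub_succ (hδ : 0 ≤ δ)
    (hgap : ∀ i : Fin n, δ ≤ a i.succ - a i.castSucc) (i j : Fin (n + 1)) :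
    δ ^ 2 * ((j : ℝ) - i) ^ 2 ≤ (a j - a i) ^ 2 := by
  wlog hij : i ≤ j generalizing i j
  · have := this j i (le_of_not_ge hij)
    nlinarith
  have hji : (0 : ℝ) ≤ (j : ℝ) - i := sub_nonneg.2 (by exact_mod_cast hij)
  rw [← mul_pow]
  exact pow_le_pow_left₀ (mul_nonneg hδ hji) (mul_sub_le_sub_of_le_sub_succ hgap hij) 2

end Gaps

theorem stmt_10_general (m : ℕ) (a : Fin (m + 1) → ℝ)
    (hgap : ∀ i : Fin m,
      Real.sqrt (4 - 6 / ((m : ℝ) + 2)) ≤ a i.succ - a i.castSucc) :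
    4 * (∑ i, a i) ^ 2 - 4 * ((m : ℝ) + 1) * (∑ i, (a i) ^ 2) +
      ((m : ℝ) + 1) * ((2 * m + 2).choose 3 : ℝ) ≤ 0 := by
  set δ := Real.sqrt (4 - 6 / ((m : ℝ) + 2))
  have hm : (0 : ℝ) < m + 2 := by positivity
  have hδ_sq : δ ^ 2 = 4 - 6 / ((m : ℝ) + 2) := by
    refine Real.sq_sqrt ?_
    rw [sub_nonneg, div_le_iff₀ hm]
    linarith [(Nat.cast_nonneg m : (0 : ℝ) ≤ m)]
  have hpairs : δ ^ 2 * ∑ i : Fin (m + 1), ∑ j : Fin (m + 1), ((j : ℝ) - i) ^ 2 ≤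
      ∑ i, ∑ j, (a j - a i) ^ 2 := by
    simp only [mul_sum]
    exact sum_le_sum fun i _ => sum_le_sum fun j _ =>
      sq_mul_sub_le_sq_sub_of_le_sub_succ (Real.sqrt_nonneg _) hgap i j
  have hequal : δ ^ 2 * ∑ i : Fin (m + 1), ∑ j : Fin (m + 1), ((j : ℝ) - i) ^ 2 =
      ((m : ℝ) + 1) * ((2 * m + 2).choose 3 : ℝ) / 2 := by
    rw [Fin.sum_sum_val_sub_sq, Nat.cast_choose_three, hδ_sq]
    field_simp
    push_cast
    ring
  rw [hequal, sum_sum_sub_sq, Fintype.card_fin] at hpairs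
  push_cast at hpairs
  linarith

theorem stmt_10 (m : ℕ) (a : Fin (m + 1) → ℝ) (hmono : StrictMono a)
    (hgap : ∀ i : Fin m,
      Real.sqrt (4 - 6 / ((m : ℝ) + 2)) ≤ a i.succ - a i.castSucc) :
    4 * (∑ i, a i) ^ 2 - 4 * ((m : ℝ) + 1) * (∑ i, (a i) ^ 2) +
      ((m : ℝ) + 1) * ((2 * m + 2).choose 3 : ℝ) ≤ 0 :=
  stmt_10_general m a hgap
end

section
/- Let u and v be real numbers with 0 < u < 1 and 0 < v < 1. If (1 − 1/u²)·(1 − 1/v²) > 1, then u + v < √2. -/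
theorem stmt_12 (u v : ℝ) (hu0 : 0 < u) (hu1 : u < 1) (hv0 : 0 < v) (hv1 : v < 1)
    (h : 1 < (1 - 1 / u ^ 2) * (1 - 1 / v ^ 2)) :
    u + v < Real.sqrt 2 := by
  have hu2 : (0:ℝ) < u ^ 2 := by positivity
  have hv2 : (0:ℝ) < v ^ 2 := by positivity
  have key : u ^ 2 + v ^ 2 < 1 := by
    have h' : (1 - 1 / u ^ 2) * (1 - 1 / v ^ 2) * (u ^ 2 * v ^ 2) > 1 * (u ^ 2 * v ^ 2) := by
      exact mul_lt_mul_of_pos_right h (by positivity)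
    have e : (1 - 1 / u ^ 2) * (1 - 1 / v ^ 2) * (u ^ 2 * v ^ 2) = (u ^ 2 - 1) * (v ^ 2 - 1) := by
      field_simp
    rw [e] at h'
    nlinarith
  rw [show u + v = Real.sqrt ((u+v)^2) by rw [Real.sqrt_sq (by positivity)]]
  apply Real.sqrt_lt_sqrt (by positivity)
  nlinarith [sq_nonneg (u - v)]
end

section
/- Let n and k be integers with 2 ≤ k < n/2 − 2·3^{−3/4}·√n, and let P_k^n be the binary Krawtchouk polynomial of degree k, i.e. the unique real polynomial satisfying P_k^n(x) = Σ_{j=0}^{k} (−1)^j · C(x, j) · C(n−x, k−j) for all real x, where C(x, j) = x(x−1)···(x−j+1)/j! is the generalized binomial coefficient. Then every real root x of P_k^n satisfies |x − n/2| ≤ √(k(n−k)) · (1 − (1/4)·((n−2k)/(k(n−k)))^{2/3}). -/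
set_option maxHeartbeats 1600000

/-- Generalized binomial coefficient `C(x, j) = x(x-1)⋯(x-j+1)/j!`. -/
noncomputable def genChoose (x : ℝ) (j : ℕ) : ℝ :=
  (∏ i ∈ Finset.range j, (x - (i : ℝ))) / (j.factorial : ℝ)

/-- `IsKrawtchouk n k P` : `P` is the binary Krawtchouk polynomial `P_k^n`, i.e.
`P(x) = ∑_{j=0}^{k} (-1)^j C(x, j) C(n - x, k - j)` for all real `x`, of degree `k`. -/
def IsKrawtchouk (n k : ℕ) (P : Polynomial ℝ) : Prop :=
  P.natDegree = k ∧ ∀ x : ℝ, P.eval x =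
    ∑ j ∈ Finset.range (k + 1), (-1 : ℝ) ^ j * genChoose x j * genChoose ((n : ℝ) - x) (k - j)

lemma genChoose_zero (y : ℝ) : genChoose y 0 = 1 := by
  simp [genChoose]

lemma gc_succ (y : ℝ) (j : ℕ) :
    ((j : ℝ) + 1) * genChoose y (j+1) = (y - j) * genChoose y j := by
  unfold genChoose
  rw [Finset.prod_range_succ, Nat.factorial_succ]
  have h1 : (j.factorial : ℝ) ≠ 0 := by positivity
  push_cast
  field_simp

/-- Krawtchouk sum of degree m. -/
noncomputable def KS (n x : ℝ) (m : ℕ) : ℝ :=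
  ∑ j ∈ Finset.range (m+1), (-1 : ℝ)^j * genChoose x j * genChoose (n - x) (m - j)

lemma KS_zero (n x : ℝ) : KS n x 0 = 1 := by
  simp [KS, genChoose_zero]

lemma KS_one (n x : ℝ) : KS n x 1 = n - 2*x := by
  have h1 : ∀ y : ℝ, genChoose y 1 = y := by
    intro y; unfold genChoose; simp
  simp [KS, Finset.sum_range_succ, genChoose_zero, h1]
  ring

section shifts
variable (n x : ℝ)

lemma shift1 (N : ℕ) :
    ∑ j ∈ Finset.range (N+2), (-1:ℝ)^j * (j:ℝ) * (genChoose x j * genChoose (n-x) (N+1-j))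
    = -∑ j ∈ Finset.range (N+1), (-1:ℝ)^j * ((x - j) * genChoose x j * genChoose (n-x) (N-j)) := by
  rw [Finset.sum_range_succ']
  simp only [Nat.cast_zero, Nat.cast_succ, pow_succ, Nat.succ_sub_succ_eq_sub,
    mul_zero, zero_mul, add_zero]
  rw [← Finset.sum_neg_distrib]
  apply Finset.sum_congr rfl
  intro j hj
  have h := gc_succ x j
  push_cast
  linear_combination (-(-1:ℝ)^j * genChoose (n-x) (N-j)) * h

lemma shift2 (N : ℕ) :
    ∑ j ∈ Finset.range (N+2), (-1:ℝ)^j * ((N+1-j : ℕ):ℝ) * (genChoose x j * genChoose (n-x) (N+1-j))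
    = ∑ j ∈ Finset.range (N+1), (-1:ℝ)^j * (((n-x) - ((N-j:ℕ):ℝ)) * genChoose x j * genChoose (n-x) (N-j)) := by
  rw [Finset.sum_range_succ]
  simp only [Nat.sub_self, Nat.cast_zero, mul_zero, zero_mul, mul_one, add_zero]
  apply Finset.sum_congr rfl
  intro j hj
  have hjN : j ≤ N := by simpa [Nat.lt_succ_iff] using hj
  have h1 : N + 1 - j = (N - j) + 1 := by omega
  rw [h1]
  have h := gc_succ (n - x) (N - j)
  push_cast
  linear_combination ((-1:ℝ)^j * genChoose x j) * h

end shifts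

lemma KS_rec (n x : ℝ) (m : ℕ) :
    ((m:ℝ)+2) * KS n x (m+2) = (n - 2*x) * KS n x (m+1) - ((n:ℝ) - m) * KS n x m := by
  have step1 : ((m:ℝ)+2) * KS n x (m+2)
      = (∑ j ∈ Finset.range (m+3), (-1:ℝ)^j * (j:ℝ) * (genChoose x j * genChoose (n-x) (m+2-j)))
      + (∑ j ∈ Finset.range (m+3), (-1:ℝ)^j * ((m+2-j : ℕ):ℝ) * (genChoose x j * genChoose (n-x) (m+2-j))) := by
    rw [KS, Finset.mul_sum, ← Finset.sum_add_distrib]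
    apply Finset.sum_congr rfl
    intro j hj
    have hjm : j ≤ m + 2 := by simpa [Nat.lt_succ_iff] using hj
    have hc : ((m+2-j : ℕ):ℝ) = (m:ℝ) + 2 - j := by
      push_cast [Nat.cast_sub hjm]; ring
    rw [hc]; ring
  have comb : (∑ j ∈ Finset.range (m+2), (-1:ℝ)^j * (((n-x) - ((m+1-j:ℕ):ℝ)) * genChoose x j * genChoose (n-x) (m+1-j)))
      - (∑ j ∈ Finset.range (m+2), (-1:ℝ)^j * ((x - j) * genChoose x j * genChoose (n-x) (m+1-j)))
      = (n - 2*x) * KS n x (m+1)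
      + ((∑ j ∈ Finset.range (m+2), (-1:ℝ)^j * (j:ℝ) * (genChoose x j * genChoose (n-x) (m+1-j)))
      - (∑ j ∈ Finset.range (m+2), (-1:ℝ)^j * ((m+1-j : ℕ):ℝ) * (genChoose x j * genChoose (n-x) (m+1-j)))) := by
    rw [KS, Finset.mul_sum, ← Finset.sum_sub_distrib, ← Finset.sum_sub_distrib,
      ← Finset.sum_add_distrib]
    apply Finset.sum_congr rfl
    intro j hj
    have hjm : j ≤ m + 1 := by simpa [Nat.lt_succ_iff] using hj
    have hc : ((m+1-j : ℕ):ℝ) = (m:ℝ) + 1 - j := by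
      push_cast [Nat.cast_sub hjm]; ring
    rw [hc]; ring
  have step3 : (∑ j ∈ Finset.range (m+1), (-1:ℝ)^j * ((x - j) * genChoose x j * genChoose (n-x) (m-j)))
      + (∑ j ∈ Finset.range (m+1), (-1:ℝ)^j * (((n-x) - ((m-j:ℕ):ℝ)) * genChoose x j * genChoose (n-x) (m-j)))
      = ((n:ℝ) - m) * KS n x m := by
    rw [KS, Finset.mul_sum, ← Finset.sum_add_distrib]
    apply Finset.sum_congr rfl
    intro j hj
    have hjm : j ≤ m := by simpa [Nat.lt_succ_iff] using hj
    have hc : ((m-j : ℕ):ℝ) = (m:ℝ) - j := by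
      push_cast [Nat.cast_sub hjm]; ring
    rw [hc]; ring
  have e1 := shift1 n x (m+1)
  have e2 := shift2 n x (m+1)
  have e3 := shift1 n x m
  have e4 := shift2 n x m
  have h32 : (m:ℕ) + 1 + 2 = m + 3 := by omega
  rw [h32] at e1 e2
  have h21 : (m:ℕ) + 1 + 1 = m + 2 := by omega
  rw [h21] at e1 e2 e3 e4
  linarith [step1, comb, step3, e1, e2, e3, e4]

noncomputable def Gr (T m : ℕ) : ℝ := if m ≤ T then (m:ℝ)*(2*(T:ℝ) - m) else (T:ℝ)^2

lemma Gr_of_le {T m : ℕ} (h : m ≤ T) : Gr T m = (m:ℝ)*(2*(T:ℝ) - m) := if_pos h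

lemma Gr_of_ge {T m : ℕ} (h : T ≤ m) : Gr T m = (T:ℝ)^2 := by
  unfold Gr
  rcases eq_or_lt_of_le h with rfl | h'
  · rw [if_pos le_rfl]; ring
  · rw [if_neg (by omega)]

lemma Gr_nonneg (T m : ℕ) : 0 ≤ Gr T m := by
  unfold Gr
  split
  · have h : (m:ℝ) ≤ T := by exact_mod_cast ‹m ≤ T›
    have : (0:ℝ) ≤ m := by positivity
    nlinarith
  · positivity

lemma Gr_le (T m : ℕ) : Gr T m ≤ (T:ℝ)^2 := by
  unfold Gr
  split
  · have h : (m:ℝ) ≤ T := by exact_mod_cast ‹m ≤ T›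
    nlinarith [sq_nonneg ((T:ℝ) - m)]
  · exact le_refl _

lemma Gr_pos (T m : ℕ) (hT : 1 ≤ T) (hm : 1 ≤ m) : 0 < Gr T m := by
  unfold Gr
  split
  · have h : (m:ℝ) ≤ T := by exact_mod_cast ‹m ≤ T›
    have h1 : (1:ℝ) ≤ m := by exact_mod_cast hm
    have h2 : (1:ℝ) ≤ T := by exact_mod_cast hT
    nlinarith
  · have h2 : (1:ℝ) ≤ T := by exact_mod_cast hT
    positivity

lemma sqrt_lin (p t : ℝ) (hp : 0 < p) (hpt : 0 ≤ p + t) :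
    Real.sqrt (p + t) ≤ Real.sqrt p + t/(2*Real.sqrt p) := by
  set sp := Real.sqrt p with hspdef
  have hsp : 0 < sp := Real.sqrt_pos.2 hp
  have hsp2 : sp^2 = p := Real.sq_sqrt hp.le
  have hR : 0 ≤ sp + t/(2*sp) := by
    have heq : sp + t/(2*sp) = (2*p + t)/(2*sp) := by
      field_simp; linear_combination 2*hsp2
    rw [heq]
    apply div_nonneg (by linarith) (by positivity)
  have h2 : p + t ≤ (sp + t/(2*sp))^2 := by
    have hexp : (sp + t/(2*sp))^2 = p + t + t^2/(4*p) := by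
      rw [← hsp2]
      field_simp
      ring
    rw [hexp]
    have : 0 ≤ t^2/(4*p) := by positivity
    linarith
  calc Real.sqrt (p+t) ≤ Real.sqrt ((sp + t/(2*sp))^2) := Real.sqrt_le_sqrt h2
    _ = |sp + t/(2*sp)| := Real.sqrt_sq_eq_abs _
    _ = sp + t/(2*sp) := abs_of_nonneg hR

lemma core (p X k q : ℝ) (T m : ℕ)
    (hp : 0 < p) (hX : 0 ≤ X) (hk : 0 ≤ k) (hq : 0 ≤ q) (hT : 1 ≤ T) (hm : 1 ≤ m)
    (hII : (T:ℝ)^2 * (2*k + X*p) ≤ 2*p)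
    (hI : 2*k + X*p ≤ (2*(T:ℝ)+1)*q + 2*((T:ℝ)+1)^2)
    (ht1 : 0 ≤ p + (k - (m:ℝ)*(q+(m:ℝ)+1)))
    (ht2 : 0 ≤ p + (k - ((m:ℝ)-1)*(q+(m:ℝ)))) :
    Real.sqrt (p + (k - (m:ℝ)*(q+(m:ℝ)+1))) * Gr T (m+1)
      + Real.sqrt (p + (k - ((m:ℝ)-1)*(q+(m:ℝ)))) * Gr T (m-1)
      ≤ (2*Real.sqrt p - X*Real.sqrt p/2) * Gr T m := by
  have hm1 : (1:ℝ) ≤ (m:ℝ) := by exact_mod_cast hm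
  have hT1 : (1:ℝ) ≤ (T:ℝ) := by exact_mod_cast hT
  set sp := Real.sqrt p with hspdef
  have hsp : 0 < sp := Real.sqrt_pos.2 hp
  have hsp2 : sp^2 = p := Real.sq_sqrt hp.le
  set t1 : ℝ := k - (m:ℝ)*(q+(m:ℝ)+1) with ht1def
  set t2 : ℝ := k - ((m:ℝ)-1)*(q+(m:ℝ)) with ht2def
  have hc1 : 0 ≤ (m:ℝ)*(q+(m:ℝ)+1) := by positivity
  have hc2 : 0 ≤ ((m:ℝ)-1)*(q+(m:ℝ)) := by
    apply mul_nonneg (by linarith)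
    positivity
  have hb1 := sqrt_lin p t1 hp ht1
  have hb2 := sqrt_lin p t2 hp ht2
  have hg1 := Gr_nonneg T (m+1)
  have hg2 := Gr_nonneg T (m-1)
  have hg0 := Gr_nonneg T m
  have key : (2*p + t1) * Gr T (m+1) + (2*p + t2) * Gr T (m-1)
      ≤ (4*p - X*p) * Gr T m := by
    rcases lt_or_ge m T with hlt | hge
    · -- m < T
      have e1 : Gr T (m+1) = ((m:ℝ)+1)*(2*(T:ℝ) - ((m:ℝ)+1)) := by
        rw [Gr_of_le (by omega)]; push_cast; ring
      have e2 : Gr T (m-1) = ((m:ℝ)-1)*(2*(T:ℝ) - ((m:ℝ)-1)) := by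
        rw [Gr_of_le (by omega)]
        have : ((m-1:ℕ):ℝ) = (m:ℝ)-1 := by
          push_cast [Nat.cast_sub hm]; ring
        rw [this]
      have e0 : Gr T m = (m:ℝ)*(2*(T:ℝ) - (m:ℝ)) := Gr_of_le hlt.le
      rw [e1, e2, e0]
      have hmT : (m:ℝ) + 1 ≤ (T:ℝ) := by exact_mod_cast hlt
      have hG0le : (m:ℝ)*(2*(T:ℝ) - (m:ℝ)) ≤ (T:ℝ)^2 := by nlinarith [sq_nonneg ((T:ℝ)-(m:ℝ))]
      have hprod : (2*k+X*p)*((m:ℝ)*(2*(T:ℝ)-(m:ℝ))) ≤ (2*k+X*p)*(T:ℝ)^2 :=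
        mul_le_mul_of_nonneg_left hG0le (by positivity)
      have hg1' : 0 ≤ ((m:ℝ)+1)*(2*(T:ℝ) - ((m:ℝ)+1)) := by nlinarith
      have hg2' : 0 ≤ ((m:ℝ)-1)*(2*(T:ℝ) - ((m:ℝ)-1)) := by nlinarith
      rw [ht1def, ht2def]
      nlinarith [hprod, hII, mul_nonneg hc1 hg1', mul_nonneg hc2 hg2', hp.le]
    · rcases eq_or_lt_of_le hge with heq | hgt
      · -- m = T
        subst heq
        have e1 : Gr T (T+1) = (T:ℝ)^2 := Gr_of_ge (by omega)
        have e0 : Gr T T = (T:ℝ)^2 := Gr_of_ge le_rfl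
        have e2 : Gr T (T-1) = (T:ℝ)^2 - 1 := by
          rw [Gr_of_le (by omega)]
          have : ((T-1:ℕ):ℝ) = (T:ℝ)-1 := by push_cast [Nat.cast_sub hT]; ring
          rw [this]; ring
        rw [e1, e2, e0, ht1def, ht2def]
        have hsq : 0 ≤ (T:ℝ)^2 - 1 := by nlinarith
        nlinarith [hII, mul_nonneg hc1 (sq_nonneg (T:ℝ)), mul_nonneg hc2 hsq, hp.le, hk]
      · -- T < m
        have e1 : Gr T (m+1) = (T:ℝ)^2 := Gr_of_ge (by omega)
        have e0 : Gr T m = (T:ℝ)^2 := Gr_of_ge hge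
        have e2 : Gr T (m-1) = (T:ℝ)^2 := Gr_of_ge (by omega)
        rw [e1, e2, e0, ht1def, ht2def]
        have hm' : (T:ℝ)+1 ≤ (m:ℝ) := by exact_mod_cast hgt
        have hcc : 2*k + X*p ≤ (m:ℝ)*(q+(m:ℝ)+1) + ((m:ℝ)-1)*(q+(m:ℝ)) := by
          nlinarith [hI, mul_nonneg hq (by linarith : 0 ≤ (m:ℝ) - ((T:ℝ)+1))]
        nlinarith [mul_le_mul_of_nonneg_right hcc (sq_nonneg (T:ℝ))]
  -- convert to sqrt form
  have hL : Real.sqrt (p + t1) * Gr T (m+1) + Real.sqrt (p + t2) * Gr T (m-1)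
      ≤ (sp + t1/(2*sp)) * Gr T (m+1) + (sp + t2/(2*sp)) * Gr T (m-1) :=
    add_le_add (mul_le_mul_of_nonneg_right hb1 hg1) (mul_le_mul_of_nonneg_right hb2 hg2)
  have hEq1 : (sp + t1/(2*sp)) * Gr T (m+1) + (sp + t2/(2*sp)) * Gr T (m-1)
      = ((2*p + t1) * Gr T (m+1) + (2*p + t2) * Gr T (m-1))/(2*sp) := by
    field_simp
    linear_combination (2*(Gr T (m+1)+Gr T (m-1))) * hsp2
  have hEq2 : (2*sp - X*sp/2) * Gr T m = ((4*p - X*p) * Gr T m)/(2*sp) := by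
    field_simp
    linear_combination ((4 - X)*Gr T m) * hsp2
  calc Real.sqrt (p + t1) * Gr T (m+1) + Real.sqrt (p + t2) * Gr T (m-1)
      ≤ ((2*p + t1) * Gr T (m+1) + (2*p + t2) * Gr T (m-1))/(2*sp) := by
        rw [← hEq1]; exact hL
    _ ≤ ((4*p - X*p) * Gr T m)/(2*sp) := by
        apply div_le_div_of_nonneg_right ?_ (by positivity)
        exact key
    _ = (2*sp - X*sp/2) * Gr T m := hEq2.symm

/-- Key quartic inequality. -/
lemma keyK (k q e : ℝ) (hk : 2 ≤ k) (hq : 1 ≤ q) (he : 0 < e)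
    (he3 : e^3 = q^2 * (k*(k+q))) (hH : 256*(2*k+q)^2 ≤ 27*q^4) :
    (e^2 + 4*e*k + q*e - 2*k*q)^2 ≤ 8*e^3*(e+2*k) := by
  have hk0 : 0 < k := by linarith
  have hq0 : 0 < q := by linarith
  have he6 : 27 * k^6 ≤ e^6 := by
    have h2 : e^6 = q^4 * (k*(k+q))^2 := by
      have : e^6 = (e^3)^2 := by ring
      rw [this, he3]; ring
    nlinarith [sq_nonneg (q*k), mul_pos hk0 hq0, sq_nonneg k, sq_nonneg q,
      mul_nonneg (mul_nonneg hk0.le hk0.le) (mul_nonneg hk0.le hq0.le),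
      mul_nonneg (mul_nonneg (mul_nonneg hk0.le hk0.le) (mul_nonneg hk0.le hk0.le)) (mul_nonneg hk0.le hq0.le),
      mul_nonneg (mul_nonneg (mul_nonneg hk0.le hk0.le) (mul_nonneg hk0.le hq0.le)) (mul_nonneg hq0.le hq0.le)]
  have he2 : 3 * k^2 ≤ e^2 := by
    have h3 : (3*k^2)^3 ≤ (e^2)^3 := by nlinarith
    exact le_of_pow_le_pow_left₀ (by norm_num) (sq_nonneg e) h3
  rcases le_total (2*k) e with hA | hB
  · -- case e ≥ 2k
    have hq3 : 2*q^3 ≤ e^3 := by nlinarith [sq_nonneg (q*k)]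
    have hqe : 5*q ≤ 4*e := by
      have h53 : (5*q)^3 ≤ (4*e)^3 := by nlinarith
      exact le_of_pow_le_pow_left₀ (by norm_num) (by positivity) h53
    have hI0 : 0 ≤ e^2 + 4*e*k + q*e - 2*k*q := by nlinarith
    have hIu : e^2 + 4*e*k + q*e - 2*k*q ≤ e^2 + 4*e*k + q*e := by nlinarith
    have hsub : (e+4*k+q)^2 ≤ 8*e*(e+2*k) := by
      nlinarith [mul_nonneg (sub_nonneg.2 hqe) hq0.le, mul_nonneg (sub_nonneg.2 hqe) he.le,
        mul_nonneg (sub_nonneg.2 hqe) hk0.le,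
        mul_nonneg (sub_nonneg.2 hA) (by linarith : (0:ℝ) ≤ e + 2*k)]
    calc (e^2 + 4*e*k + q*e - 2*k*q)^2 ≤ (e^2 + 4*e*k + q*e)^2 :=
          pow_le_pow_left₀ hI0 hIu 2
      _ = e^2 * (e+4*k+q)^2 := by ring
      _ ≤ e^2 * (8*e*(e+2*k)) := mul_le_mul_of_nonneg_left hsub (sq_nonneg e)
      _ = 8*e^3*(e+2*k) := by ring
  · -- case e ≤ 2k
    rcases le_total 0 (e^2 + 4*e*k + q*e - 2*k*q) with hI | hI
    · have hIu : e^2 + 4*e*k + q*e - 2*k*q ≤ e^2 + 4*e*k := by nlinarith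
      have hsub : (e+4*k)^2 ≤ 8*e*(e+2*k) := by
        nlinarith [mul_pos he hk0]
      calc (e^2 + 4*e*k + q*e - 2*k*q)^2 ≤ (e^2 + 4*e*k)^2 := pow_le_pow_left₀ hI hIu 2
        _ = e^2 * (e+4*k)^2 := by ring
        _ ≤ e^2 * (8*e*(e+2*k)) := mul_le_mul_of_nonneg_left hsub (sq_nonneg e)
        _ = 8*e^3*(e+2*k) := by ring
    · have h1 : (e^2 + 4*e*k + q*e - 2*k*q)^2 ≤ (2*k*q)^2 := by
        have h2 : -(2*k*q) ≤ e^2 + 4*e*k + q*e - 2*k*q := by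
          nlinarith [mul_pos he hk0, mul_pos hq0 he, sq_nonneg e]
        nlinarith
      have h4 : (2*k*q)^2 ≤ 4*e^3 := by
        nlinarith [mul_nonneg (mul_nonneg (mul_nonneg hq0.le hq0.le) hq0.le) hk0.le]
      nlinarith [pow_pos he 3]

lemma feasibility (k q e : ℝ) (hk : 2 ≤ k) (hq : 1 ≤ q) (he : 0 < e)
    (he3 : e^3 = q^2 * (k*(k+q))) (hH : 256*(2*k+q)^2 ≤ 27*q^4) :
    ∃ T : ℕ, 1 ≤ T ∧
      (T:ℝ)^2 * (2*k + e) ≤ 2*(k*(k+q)) ∧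
      2*k + e ≤ (2*(T:ℝ)+1)*q + 2*((T:ℝ)+1)^2 := by
  have hk0 : 0 < k := by linarith
  have hq0 : 0 < q := by linarith
  set p : ℝ := k*(k+q) with hpdef
  have hp : 0 < p := by positivity
  set W : ℝ := e/2 + k with hWdef
  have hW : 0 < W := by positivity
  have hWp : W ≤ p := by
    have hAM : e^3 ≤ ((2*q+p)/3)^3 := by
      rw [he3, hpdef]; nlinarith [sq_nonneg (q - k*(k+q)), sq_nonneg q, mul_pos hk0 hq0,
        mul_nonneg (mul_nonneg hq0.le hq0.le) hq0.le]
    have he' : e ≤ (2*q+p)/3 := le_of_pow_le_pow_left₀ (by norm_num) (by positivity) hAM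
    have hp2 : 2*k + 2*q ≤ p := by rw [hpdef]; nlinarith
    rw [hWdef]; linarith
  set τ : ℝ := Real.sqrt (p/W) with hτdef
  have hτ0 : 0 ≤ τ := Real.sqrt_nonneg _
  have hττ : τ^2 = p/W := Real.sq_sqrt (by positivity)
  have hτ1 : 1 ≤ τ := by
    rw [hτdef]
    rw [show (1:ℝ) = Real.sqrt 1 by simp]
    apply Real.sqrt_le_sqrt
    rw [le_div_iff₀ hW]; linarith
  refine ⟨⌊τ⌋₊, ?_, ?_, ?_⟩
  · exact Nat.le_floor (by exact_mod_cast hτ1)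
  · -- (II)
    have hT : (⌊τ⌋₊ : ℝ) ≤ τ := Nat.floor_le hτ0
    have h1 : (⌊τ⌋₊:ℝ)^2 ≤ p/W := by
      calc (⌊τ⌋₊:ℝ)^2 ≤ τ^2 := pow_le_pow_left₀ (by positivity) hT 2
        _ = p/W := hττ
    have h2 : (⌊τ⌋₊:ℝ)^2 * W ≤ p := by
      rw [← le_div_iff₀ hW]; exact h1
    calc (⌊τ⌋₊:ℝ)^2 * (2*k+e) = (⌊τ⌋₊:ℝ)^2 * (2*W) := by rw [hWdef]; ring
      _ ≤ 2*p := by linarith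
  · -- (I)
    have hTτ : τ < (⌊τ⌋₊:ℝ) + 1 := Nat.lt_floor_add_one τ
    have hKK := keyK k q e hk hq he he3 hH
    -- 2 τ q ≥ 2W + q - 2p/W
    have hD : 2*W + q - 2*(p/W) ≤ 2*τ*q := by
      rcases le_or_gt (2*W + q - 2*(p/W)) 0 with hD0 | hD0
      · have : 0 ≤ 2*τ*q := by positivity
        linarith
      · set D : ℝ := 2*W + q - 2*(p/W) with hDdef
        have hDsq : D^2 ≤ (2*τ*q)^2 := by
          have hW2 : D * W = 2*W^2 + q*W - 2*p := by
            rw [hDdef]; field_simp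
          have hinner : 2*W^2 + q*W - 2*p = (e^2 + 4*e*k + q*e - 2*k*q)/2 := by
            rw [hWdef, hpdef]; ring
          have h4 : (2*τ*q)^2 = 4*(p/W)*q^2 := by rw [mul_pow, mul_pow, hττ]; ring
          have hq2p : q^2 * p = e^3 := by rw [hpdef, ← he3]
          -- D^2 W^2 = (inner/2)^2 ≤ 8e^3(e+2k)/4 = 2e^3(e+2k)
          have h5 : D^2 * W^2 ≤ 2*e^3*(e+2*k) := by
            have : D^2 * W^2 = ((e^2 + 4*e*k + q*e - 2*k*q)/2)^2 := by
              rw [← hinner, ← hW2]; ring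
            rw [this]; nlinarith [hKK]
          have h6 : 4*(p/W)*q^2 * W^2 = 4*e^3*W := by
            have hcan : p/W*W = p := div_mul_cancel₀ p hW.ne'
            calc 4*(p/W)*q^2*W^2 = 4*q^2*(p/W*W)*W := by ring
              _ = 4*(q^2*p)*W := by rw [hcan]; ring
              _ = 4*e^3*W := by rw [hq2p]
          have h7 : 2*e^3*(e+2*k) = 4*e^3*W := by rw [hWdef]; ring
          have h8 : D^2 * W^2 ≤ 4*(p/W)*q^2 * W^2 := by rw [h6, ← h7]; linarith
          have h9 : 0 < W^2 := by positivity
          rw [h4]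
          exact le_of_mul_le_mul_right h8 h9
        have hDτ : D ≤ 2*τ*q := by
          have h2τq : 0 ≤ 2*τ*q := by positivity
          nlinarith [hDsq]
        linarith
    have h1 : (2*τ - 1)*q ≤ (2*(⌊τ⌋₊:ℝ)+1)*q := by
      apply mul_le_mul_of_nonneg_right _ hq0.le
      linarith
    have h2 : 2*(p/W) = 2*τ^2 := by rw [hττ]
    have h3 : 2*τ^2 ≤ 2*((⌊τ⌋₊:ℝ)+1)^2 := by
      have := pow_le_pow_left₀ hτ0 hTτ.le 2
      linarith
    have h4 : 2*k + e = 2*W := by rw [hWdef]; ring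
    rw [h4]
    have : 2*W ≤ (2*τ-1)*q + 2*(p/W) := by nlinarith [hD]
    linarith

lemma sum_shift (f : ℕ → ℝ) (K : ℕ) (hK : 1 ≤ K) (h0 : f 0 = 0) :
    ∑ j ∈ Finset.range K, f j = ∑ i ∈ Finset.range (K-1), f (i+1) := by
  obtain ⟨K', rfl⟩ : ∃ K', K = K'+1 := ⟨K-1, by omega⟩
  rw [Finset.sum_range_succ']
  simp [h0]

lemma sum_extend (f : ℕ → ℝ) (K : ℕ) (hK : 1 ≤ K) (hlast : f (K-1) = 0) :
    ∑ i ∈ Finset.range (K-1), f i = ∑ i ∈ Finset.range K, f i := by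
  obtain ⟨K', rfl⟩ : ∃ K', K = K'+1 := ⟨K-1, by omega⟩
  rw [Finset.sum_range_succ]
  simp at hlast
  simp [hlast]

lemma facsplit1 (i n : ℕ) (hi : 1 ≤ i) (hin : i ≤ n) :
    (i:ℝ) * Real.sqrt (((i-1).factorial * (n-(i-1)).factorial : ℕ)) =
    Real.sqrt ((i*(n-i+1):ℕ)) * Real.sqrt ((i.factorial * (n-i).factorial : ℕ)) := by
  obtain ⟨i', rfl⟩ : ∃ i', i = i'+1 := ⟨i-1, by omega⟩
  have ha : n - i' = (n - (i'+1)) + 1 := by omega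
  set a := n - (i'+1) with hadef
  have h1 : i'+1-1 = i' := by omega
  rw [h1, ha]
  have hc : ((i'+1:ℕ):ℝ) = Real.sqrt (((i'+1:ℕ):ℝ)^2) := (Real.sqrt_sq (by positivity)).symm
  calc ((i'+1:ℕ):ℝ) * Real.sqrt ((i'.factorial * (a+1).factorial : ℕ))
      = Real.sqrt (((i'+1:ℕ):ℝ)^2) * Real.sqrt ((i'.factorial * (a+1).factorial : ℕ)) := by
        rw [← hc]
    _ = Real.sqrt ((((i'+1:ℕ):ℝ))^2 * ((i'.factorial * (a+1).factorial : ℕ):ℝ)) := by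
        rw [Real.sqrt_mul (by positivity)]
    _ = Real.sqrt ((((i'+1)*(n-(i'+1)+1):ℕ):ℝ) * (((i'+1).factorial * a.factorial : ℕ):ℝ)) := by
        congr 1
        have hn : n - (i'+1) + 1 = a + 1 := by omega
        rw [hn]
        push_cast [Nat.factorial_succ]
        ring
    _ = Real.sqrt (((i'+1)*(n-(i'+1)+1):ℕ)) * Real.sqrt ((((i'+1).factorial * a.factorial : ℕ))) := by
        rw [Real.sqrt_mul (by positivity)]

lemma facsplit2 (i n : ℕ) (hin : i+1 ≤ n) :
    ((n:ℝ) - i) * Real.sqrt ((((i+1).factorial * (n-(i+1)).factorial : ℕ))) =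
    Real.sqrt (((i+1)*(n-i):ℕ)) * Real.sqrt ((i.factorial * (n-i).factorial : ℕ)) := by
  have hb : n - i = (n - (i+1)) + 1 := by omega
  set b := n - (i+1) with hbdef
  have hni : ((n:ℝ) - i) = ((b+1:ℕ):ℝ) := by
    rw [hbdef]; push_cast [Nat.cast_sub (show i+1 ≤ n from hin)]; ring
  rw [hni, hb]
  have hc : ((b+1:ℕ):ℝ) = Real.sqrt (((b+1:ℕ):ℝ)^2) := (Real.sqrt_sq (by positivity)).symm
  calc ((b+1:ℕ):ℝ) * Real.sqrt (((i+1).factorial * b.factorial : ℕ))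
      = Real.sqrt (((b+1:ℕ):ℝ)^2) * Real.sqrt (((i+1).factorial * b.factorial : ℕ)) := by rw [← hc]
    _ = Real.sqrt ((((b+1:ℕ):ℝ))^2 * (((i+1).factorial * b.factorial : ℕ):ℝ)) := by
        rw [Real.sqrt_mul (by positivity)]
    _ = Real.sqrt ((((i+1)*(b+1):ℕ):ℝ) * ((i.factorial * (b+1).factorial : ℕ):ℝ)) := by
        congr 1
        push_cast [Nat.factorial_succ]
        ring
    _ = Real.sqrt (((i+1)*(b+1):ℕ)) * Real.sqrt ((i.factorial * (b+1).factorial : ℕ)) := by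
        rw [Real.sqrt_mul (by positivity)]

lemma Gr_zero (T : ℕ) : Gr T 0 = 0 := by simp [Gr]

theorem stmt_16 (n k : ℕ) (hk : 2 ≤ k)
    (hkn : (k : ℝ) < (n : ℝ) / 2 - 2 * (3 : ℝ) ^ (-(3 : ℝ) / 4) * Real.sqrt n)
    (P : Polynomial ℝ) (hP : IsKrawtchouk n k P)
    (x : ℝ) (hx : P.eval x = 0) :
    |x - (n : ℝ) / 2| ≤ Real.sqrt ((k : ℝ) * ((n : ℝ) - k)) *
      (1 - (1 / 4) * (((n : ℝ) - 2 * k) / ((k : ℝ) * ((n : ℝ) - k))) ^ ((2 : ℝ) / 3)) := by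
  obtain ⟨hdeg, hPeval⟩ := hP
  have hc0 : (0:ℝ) < (3:ℝ) ^ (-(3:ℝ)/4) := Real.rpow_pos_of_pos (by norm_num) _
  have hsn : 0 ≤ Real.sqrt n := Real.sqrt_nonneg _
  have hkr2 : (2:ℝ) ≤ (k:ℝ) := by exact_mod_cast hk
  -- q > 4 c sqrt n ≥ 0
  have hqc : 4 * ((3:ℝ) ^ (-(3:ℝ)/4)) * Real.sqrt n < (n:ℝ) - 2*k := by nlinarith [hkn]
  have h2k : 2*k < n := by
    have h1 : (2*k:ℝ) < (n:ℝ) := by nlinarith [mul_nonneg (mul_nonneg (by norm_num : (0:ℝ) ≤ 4) hc0.le) hsn]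
    exact_mod_cast h1
  have hq1 : (1:ℝ) ≤ (n:ℝ) - 2*k := by
    have : (2*k+1:ℕ) ≤ n := by omega
    have h2 : ((2*k+1:ℕ):ℝ) ≤ (n:ℝ) := by exact_mod_cast this
    push_cast at h2; linarith
  set q : ℝ := (n:ℝ) - 2*k with hqdef
  set p : ℝ := (k:ℝ)*((n:ℝ)-k) with hpdef
  have hkn' : (k:ℝ) + q = (n:ℝ) - k := by rw [hqdef]; ring
  have hp : 0 < p := by
    rw [hpdef]; apply mul_pos (by linarith); linarith
  have hpform : (k:ℝ)*((k:ℝ)+q) = p := by rw [hpdef, hkn']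
  clear_value q p
  -- hypothesis H
  have hH : 256*(2*(k:ℝ)+q)^2 ≤ 27*q^4 := by
    have hc4 : ((3:ℝ) ^ (-(3:ℝ)/4))^(4:ℕ) = 1/27 := by
      rw [← Real.rpow_natCast ((3:ℝ) ^ (-(3:ℝ)/4)) 4, ← Real.rpow_mul (by norm_num : (0:ℝ) ≤ 3)]
      norm_num
    have hsn2 : (Real.sqrt n)^(2:ℕ) = (n:ℝ) := Real.sq_sqrt (by positivity)
    have hq0 : (0:ℝ) ≤ 4 * ((3:ℝ) ^ (-(3:ℝ)/4)) * Real.sqrt n := by positivity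
    have hq4 : (4 * ((3:ℝ) ^ (-(3:ℝ)/4)) * Real.sqrt n)^(4:ℕ) ≤ q^(4:ℕ) :=
      pow_le_pow_left₀ hq0 hqc.le 4
    have hexp : (4 * ((3:ℝ) ^ (-(3:ℝ)/4)) * Real.sqrt n)^(4:ℕ)
        = 256 * (1/27) * ((n:ℝ))^2 := by
      rw [show (4 * ((3:ℝ) ^ (-(3:ℝ)/4)) * Real.sqrt n)^(4:ℕ)
          = 4^(4:ℕ) * (((3:ℝ) ^ (-(3:ℝ)/4))^(4:ℕ)) * ((Real.sqrt n)^(2:ℕ))^2 by ring]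
      rw [hc4, hsn2]; norm_num
    have h2kq : 2*(k:ℝ) + q = (n:ℝ) := by rw [hqdef]; ring
    rw [h2kq]
    rw [hexp] at hq4
    linarith
  -- X, e, feasibility
  have hq0 : (0:ℝ) < q := by linarith
  set X : ℝ := (q/p) ^ ((2:ℝ)/3) with hXdef
  have hX : 0 < X := Real.rpow_pos_of_pos (by positivity) _
  have hX3 : X^(3:ℕ) = (q/p)^(2:ℕ) := by
    rw [hXdef, ← Real.rpow_natCast ((q/p) ^ ((2:ℝ)/3)) 3, ← Real.rpow_mul (by positivity)]
    norm_num
  set e : ℝ := X * p with hedef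
  have he : 0 < e := mul_pos hX hp
  have he3 : e^3 = q^2 * ((k:ℝ)*((k:ℝ)+q)) := by
    rw [hpform, hedef]
    have h1 : (X*p)^3 = X^(3:ℕ) * p^3 := by ring
    rw [h1, hX3, div_pow]
    field_simp
  obtain ⟨T, hT1, hII0, hI0⟩ := feasibility (k:ℝ) q e hkr2 hq1 he he3 hH
  rw [hpform] at hII0
  rw [hedef] at hII0 hI0
  -- the recurrence relations at the root
  have huk : KS (n:ℝ) x k = 0 := by rw [KS, ← hPeval x]; exact hx
  have heq : ∀ j, j < k → ((j:ℝ)+1) * KS (n:ℝ) x (j+1)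
      + ((n:ℝ) - j + 1) * (if j = 0 then 0 else KS (n:ℝ) x (j-1))
      = ((n:ℝ) - 2*x) * KS (n:ℝ) x j := by
    intro j hj
    rcases Nat.eq_zero_or_pos j with rfl | hj1
    · rw [if_pos rfl]
      simp [KS_zero, KS_one]
    · obtain ⟨m, rfl⟩ : ∃ m, j = m+1 := ⟨j-1, by omega⟩
      have hrec := KS_rec (n:ℝ) x m
      have h2 : m+1+1 = m+2 := rfl
      have h3 : m+1-1 = m := rfl
      rw [h2, h3, if_neg (by omega)]
      push_cast
      linear_combination hrec
  -- weights
  set w : ℕ → ℝ := fun i => Real.sqrt ((i.factorial * (n-i).factorial : ℕ)) * Gr T (k-i) with hwdef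
  have hwnn : ∀ i, 0 ≤ w i := by
    intro i; rw [hwdef]; exact mul_nonneg (Real.sqrt_nonneg _) (Gr_nonneg T _)
  have hwk : w k = 0 := by rw [hwdef]; simp [Gr_zero]
  have hw0 : 0 < w 0 := by
    rw [hwdef]; simp only
    apply mul_pos
    · apply Real.sqrt_pos.2
      exact_mod_cast Nat.mul_pos (Nat.factorial_pos _) (Nat.factorial_pos _)
    · exact Gr_pos T (k-0) hT1 (by omega)
  -- per-index condition
  have hw : ∀ i, i < k → (i:ℝ)*w (i-1) + ((n:ℝ) - i)*w (i+1)
      ≤ (2*Real.sqrt p - X*Real.sqrt p/2) * w i := by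
    intro i hik
    have hkn2 : k < n := by omega
    have hin : i ≤ n := by omega
    have hm1 : 1 ≤ k - i := by omega
    have idA : p + ((k:ℝ) - ((k-i:ℕ):ℝ)*(q+((k-i:ℕ):ℝ)+1)) = ((i*(n-i+1):ℕ):ℝ) := by
      push_cast [Nat.cast_sub (show i ≤ k by omega), Nat.cast_sub (show i ≤ n by omega)]
      rw [hpdef, hqdef]; ring
    have idB : p + ((k:ℝ) - (((k-i:ℕ):ℝ)-1)*(q+((k-i:ℕ):ℝ))) = (((i+1)*(n-i):ℕ):ℝ) := by
      push_cast [Nat.cast_sub (show i ≤ k by omega), Nat.cast_sub (show i ≤ n by omega)]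
      rw [hpdef, hqdef]; ring
    have ht1 : 0 ≤ p + ((k:ℝ) - ((k-i:ℕ):ℝ)*(q+((k-i:ℕ):ℝ)+1)) := by
      rw [idA]; positivity
    have ht2 : 0 ≤ p + ((k:ℝ) - (((k-i:ℕ):ℝ)-1)*(q+((k-i:ℕ):ℝ))) := by
      rw [idB]; positivity
    have hcore := core p X (k:ℝ) q T (k-i) hp hX.le (by linarith) (by linarith) hT1 hm1
      hII0 hI0 ht1 ht2
    rw [idA, idB] at hcore
    have hGm : (k-i)-1 = k-(i+1) := by omega
    rw [hGm] at hcore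
    have hFnn : (0:ℝ) ≤ Real.sqrt ((i.factorial*(n-i).factorial : ℕ)) := Real.sqrt_nonneg _
    have hmul := mul_le_mul_of_nonneg_right hcore hFnn
    rcases Nat.eq_zero_or_pos i with rfl | hi1
    · -- i = 0
      have hz : ((0*(n-0+1):ℕ):ℝ) = 0 := by norm_num
      rw [hz, Real.sqrt_zero] at hmul
      have f2 := facsplit2 0 n (by omega)
      have expand : ((0:ℕ):ℝ)*w (0-1) + ((n:ℝ) - ((0:ℕ):ℝ))*w (0+1)
          = (Real.sqrt (((0+1)*(n-0):ℕ)) * Gr T (k-(0+1))) * Real.sqrt ((Nat.factorial 0*(n-0).factorial : ℕ)) := by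
        simp only [hwdef]
        push_cast at f2 ⊢
        linear_combination Gr T (k-(0+1)) * f2
      rw [expand]
      calc (Real.sqrt (((0+1)*(n-0):ℕ)) * Gr T (k-(0+1))) * Real.sqrt ((Nat.factorial 0*(n-0).factorial : ℕ))
          ≤ ((2*Real.sqrt p - X*Real.sqrt p/2) * Gr T (k-0)) * Real.sqrt ((Nat.factorial 0*(n-0).factorial : ℕ)) := by
            nlinarith [hmul, hFnn]
        _ = (2*Real.sqrt p - X*Real.sqrt p/2) * w 0 := by
            simp only [hwdef]; ring
    · -- i ≥ 1
      have hGp : (k-i)+1 = k-(i-1) := by omega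
      rw [hGp] at hcore hmul
      have f1 := facsplit1 i n hi1 hin
      have f2 := facsplit2 i n (by omega)
      have expand : (i:ℝ)*w (i-1) + ((n:ℝ) - i)*w (i+1)
          = (Real.sqrt ((i*(n-i+1):ℕ)) * Gr T (k-(i-1))
            + Real.sqrt (((i+1)*(n-i):ℕ)) * Gr T (k-(i+1))) * Real.sqrt ((i.factorial*(n-i).factorial : ℕ)) := by
        simp only [hwdef]
        linear_combination Gr T (k-(i-1)) * f1 + Gr T (k-(i+1)) * f2
      rw [expand]
      calc (Real.sqrt ((i*(n-i+1):ℕ)) * Gr T (k-(i-1))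
            + Real.sqrt (((i+1)*(n-i):ℕ)) * Gr T (k-(i+1))) * Real.sqrt ((i.factorial*(n-i).factorial : ℕ))
          ≤ ((2*Real.sqrt p - X*Real.sqrt p/2) * Gr T (k-i)) * Real.sqrt ((i.factorial*(n-i).factorial : ℕ)) := hmul
        _ = (2*Real.sqrt p - X*Real.sqrt p/2) * w i := by
            simp only [hwdef]; ring
  -- summation
  set S : ℝ := ∑ j ∈ Finset.range k, w j * |KS (n:ℝ) x j| with hSdef
  have hSpos : 0 < S := by
    have h1 : w 0 * |KS (n:ℝ) x 0| ≤ S := by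
      rw [hSdef]
      apply Finset.single_le_sum (f := fun j => w j * |KS (n:ℝ) x j|)
      · intro i _; exact mul_nonneg (hwnn i) (abs_nonneg _)
      · exact Finset.mem_range.2 (by omega)
    rw [KS_zero] at h1
    simp only [abs_one, mul_one] at h1
    linarith
  have hstep : ∀ j ∈ Finset.range k, |((n:ℝ) - 2*x)| * (w j * |KS (n:ℝ) x j|)
      ≤ (((j:ℝ)+1) * w j * |KS (n:ℝ) x (j+1)|)
        + (((n:ℝ) - j + 1) * w j * (if j = 0 then 0 else |KS (n:ℝ) x (j-1)|)) := by
    intro j hj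
    have hjk : j < k := Finset.mem_range.1 hj
    have hcoef : (0:ℝ) ≤ (n:ℝ) - j + 1 := by
      have : (j:ℝ) < (n:ℝ) := by exact_mod_cast (by omega : j < n)
      linarith
    have he' := heq j hjk
    have habs1 : |((n:ℝ)-2*x) * KS (n:ℝ) x j|
        ≤ ((j:ℝ)+1)*|KS (n:ℝ) x (j+1)| + ((n:ℝ)-j+1)*(if j = 0 then 0 else |KS (n:ℝ) x (j-1)|) := by
      rw [← he']
      rcases Nat.eq_zero_or_pos j with rfl | hj1
      · rw [if_pos rfl, if_pos rfl]
        simp only [mul_zero, add_zero, Nat.cast_zero, zero_add]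
        rw [abs_mul, abs_one]
      · rw [if_neg (by omega), if_neg (by omega)]
        calc |((j:ℝ)+1) * KS (n:ℝ) x (j+1) + ((n:ℝ) - j + 1) * KS (n:ℝ) x (j-1)|
            ≤ |((j:ℝ)+1) * KS (n:ℝ) x (j+1)| + |((n:ℝ) - j + 1) * KS (n:ℝ) x (j-1)| := abs_add_le _ _
          _ = ((j:ℝ)+1)*|KS (n:ℝ) x (j+1)| + ((n:ℝ)-j+1)*|KS (n:ℝ) x (j-1)| := by
              rw [abs_mul, abs_mul, abs_of_nonneg (by positivity : (0:ℝ) ≤ (j:ℝ)+1),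
                abs_of_nonneg hcoef]
    calc |((n:ℝ) - 2*x)| * (w j * |KS (n:ℝ) x j|)
        = w j * |((n:ℝ)-2*x) * KS (n:ℝ) x j| := by rw [abs_mul]; ring
      _ ≤ w j * (((j:ℝ)+1)*|KS (n:ℝ) x (j+1)| + ((n:ℝ)-j+1)*(if j = 0 then 0 else |KS (n:ℝ) x (j-1)|)) :=
          mul_le_mul_of_nonneg_left habs1 (hwnn j)
      _ = (((j:ℝ)+1) * w j * |KS (n:ℝ) x (j+1)|)
          + (((n:ℝ) - j + 1) * w j * (if j = 0 then 0 else |KS (n:ℝ) x (j-1)|)) := by ring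
  have hA : ∑ j ∈ Finset.range k, ((j:ℝ)+1) * w j * |KS (n:ℝ) x (j+1)|
      = ∑ i ∈ Finset.range k, (i:ℝ)*w (i-1)*|KS (n:ℝ) x i| := by
    have e1 := Finset.sum_range_succ' (fun i => (i:ℝ)*w (i-1)*|KS (n:ℝ) x i|) k
    have e2 := Finset.sum_range_succ (fun i => (i:ℝ)*w (i-1)*|KS (n:ℝ) x i|) k
    rw [huk] at e2
    simp only [abs_zero, mul_zero, add_zero, Nat.cast_zero, zero_mul, Nat.add_sub_cancel] at e1 e2
    rw [e2] at e1
    have e3 : ∑ j ∈ Finset.range k, ((j:ℝ)+1) * w j * |KS (n:ℝ) x (j+1)|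
        = ∑ j ∈ Finset.range k, ((j+1:ℕ):ℝ) * w j * |KS (n:ℝ) x (j+1)| := by
      apply Finset.sum_congr rfl
      intro j _
      push_cast
      ring
    rw [e3]
    exact e1.symm
  have hB : ∑ j ∈ Finset.range k, ((n:ℝ) - j + 1) * w j * (if j = 0 then 0 else |KS (n:ℝ) x (j-1)|)
      = ∑ i ∈ Finset.range k, ((n:ℝ)-i)*w (i+1)*|KS (n:ℝ) x i| := by
    rw [sum_shift _ k (by omega) (by simp)]
    have e1 : ∀ i ∈ Finset.range (k-1), ((n:ℝ) - ((i+1:ℕ):ℝ) + 1) * w (i+1) * (if i+1 = 0 then 0 else |KS (n:ℝ) x (i+1-1)|)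
        = ((n:ℝ)-(i:ℝ))*w (i+1)*|KS (n:ℝ) x i| := by
      intro i _
      rw [if_neg (by omega)]
      have h3 : i+1-1 = i := rfl
      rw [h3]
      push_cast
      ring
    rw [Finset.sum_congr rfl e1]
    apply sum_extend _ k (by omega)
    have hlk : k-1+1 = k := by omega
    rw [hlk, hwk]
    ring
  have hsum : |((n:ℝ) - 2*x)| * S ≤ (2*Real.sqrt p - X*Real.sqrt p/2) * S := by
    calc |((n:ℝ) - 2*x)| * S
        = ∑ j ∈ Finset.range k, |((n:ℝ) - 2*x)| * (w j * |KS (n:ℝ) x j|) := by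
          rw [hSdef, Finset.mul_sum]
      _ ≤ ∑ j ∈ Finset.range k, ((((j:ℝ)+1) * w j * |KS (n:ℝ) x (j+1)|)
          + (((n:ℝ) - j + 1) * w j * (if j = 0 then 0 else |KS (n:ℝ) x (j-1)|))) :=
          Finset.sum_le_sum hstep
      _ = (∑ j ∈ Finset.range k, ((j:ℝ)+1) * w j * |KS (n:ℝ) x (j+1)|)
          + ∑ j ∈ Finset.range k, ((n:ℝ) - j + 1) * w j * (if j = 0 then 0 else |KS (n:ℝ) x (j-1)|) :=
          Finset.sum_add_distrib
      _ = ∑ i ∈ Finset.range k, ((i:ℝ)*w (i-1)*|KS (n:ℝ) x i| + ((n:ℝ)-i)*w (i+1)*|KS (n:ℝ) x i|) := by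
          rw [hA, hB, ← Finset.sum_add_distrib]
      _ ≤ ∑ i ∈ Finset.range k, (2*Real.sqrt p - X*Real.sqrt p/2) * (w i * |KS (n:ℝ) x i|) := by
          apply Finset.sum_le_sum
          intro i hi
          have h1 := hw i (Finset.mem_range.1 hi)
          have h2 := mul_le_mul_of_nonneg_right h1 (abs_nonneg (KS (n:ℝ) x i))
          calc (i:ℝ)*w (i-1)*|KS (n:ℝ) x i| + ((n:ℝ)-i)*w (i+1)*|KS (n:ℝ) x i|
              = ((i:ℝ)*w (i-1) + ((n:ℝ) - i)*w (i+1)) * |KS (n:ℝ) x i| := by ring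
            _ ≤ ((2*Real.sqrt p - X*Real.sqrt p/2) * w i) * |KS (n:ℝ) x i| := h2
            _ = (2*Real.sqrt p - X*Real.sqrt p/2) * (w i * |KS (n:ℝ) x i|) := by ring
      _ = (2*Real.sqrt p - X*Real.sqrt p/2) * S := by
          rw [hSdef, Finset.mul_sum]
  have hyb : |((n:ℝ) - 2*x)| ≤ 2*Real.sqrt p - X*Real.sqrt p/2 :=
    le_of_mul_le_mul_right (by rw [mul_comm (|((n:ℝ) - 2*x)|) S, mul_comm _ S] at hsum ⊢; exact hsum) hSpos
  -- conclusion
  have habs : |x - (n:ℝ)/2| = |((n:ℝ) - 2*x)|/2 := by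
    rw [show (n:ℝ) - 2*x = -2*(x - (n:ℝ)/2) by ring, abs_mul]
    rw [show |(-2:ℝ)| = 2 by norm_num]
    ring
  have hfin : Real.sqrt p * (1 - 1/4*X) = (2*Real.sqrt p - X*Real.sqrt p/2)/2 := by ring
  rw [habs, hfin]
  linarith [hyb]
end

section
/- Let m ≥ 1 and k > m + 1 be integers, and let a_1 < a_2 < ... < a_k be real numbers with a_{i+1} − a_i ≥ √(4 − 6/(m+2)) for all i. Then for every real x_0, max(|x_0 − a_1|, |x_0 − a_k|)² − m² ≥ (m² + 4m + 1)/(2m + 4); in particular max(|x_0 − a_1|, |x_0 − a_k|)² > m². -/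
/-!
The gaps give `a k - a 1 ≥ (k - 1) δ_m ≥ (m + 1) δ_m`, and one of `x₀ - a 1`, `a k - x₀` is at
least half of `a k - a 1`. Hence `max (|x₀ - a 1|, |x₀ - a k|)² ≥ (m + 1)² δ_m² / 4`, and
`(m + 1)² (4 - 6 / (m + 2)) / 4 - m² = (m² + 4m + 1) / (2m + 4)`.
-/

theorem nsmul_le_sub_of_le_sub_succ {G : Type*} [AddCommGroup G] [PartialOrder G]
    [IsOrderedAddMonoid G] (a : ℕ → G) (δ : G) (i n : ℕ)
    (h : ∀ j, i ≤ j → j < i + n → δ ≤ a (j + 1) - a j) :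
    n • δ ≤ a (i + n) - a i := by
  induction n with
  | zero => simp
  | succ n ih =>
    have hprev := ih fun j hij hjn => h j hij (by omega)
    have hlast := h (i + n) le_self_add (by omega)
    calc (n + 1) • δ = n • δ + δ := succ_nsmul δ n
      _ ≤ (a (i + n) - a i) + (a (i + n + 1) - a (i + n)) := add_le_add hprev hlast
      _ = a (i + (n + 1)) - a i := by rw [← add_assoc]; abel

theorem sub_le_two_mul_max_abs_sub (x a b : ℝ) : b - a ≤ 2 * max |x - a| |x - b| := by
  have ha : x - a ≤ |x - a| := le_abs_self _
  have hb : b - x ≤ |x - b| := abs_sub_comm x b ▸ le_abs_self _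
  linarith [le_max_left |x - a| |x - b|, le_max_right |x - a| |x - b|]

theorem le_sq_sub_sq_of_mul_sqrt_le (m M : ℝ) (hm : 0 ≤ m)
    (h : (m + 1) * √(4 - 6 / (m + 2)) ≤ 2 * M) :
    (m ^ 2 + 4 * m + 1) / (2 * m + 4) ≤ M ^ 2 - m ^ 2 := by
  have hm2 : 0 < m + 2 := by linarith
  have hrad : 0 ≤ 4 - 6 / (m + 2) := by
    rw [sub_nonneg, div_le_iff₀ hm2]; linarith
  have hsq : (m + 1) ^ 2 * (4 - 6 / (m + 2)) ≤ (2 * M) ^ 2 := by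
    rw [← Real.sq_sqrt hrad, ← mul_pow]
    exact pow_le_pow_left₀ (by positivity) h 2
  have hid : (m + 1) ^ 2 * (4 - 6 / (m + 2)) / 4 - m ^ 2 = (m ^ 2 + 4 * m + 1) / (2 * m + 4) := by
    field_simp
    ring
  rw [← hid]
  linarith

theorem stmt_18_general (m k : ℕ) (hk : m + 1 < k) (a : ℕ → ℝ)
    (hgap : ∀ i, 1 ≤ i → i + 1 ≤ k →
      Real.sqrt (4 - 6 / ((m : ℝ) + 2)) ≤ a (i + 1) - a i)
    (x₀ : ℝ) :
    ((m : ℝ) ^ 2 + 4 * m + 1) / (2 * m + 4) ≤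
        max |x₀ - a 1| |x₀ - a k| ^ 2 - (m : ℝ) ^ 2 ∧
      (m : ℝ) ^ 2 < max |x₀ - a 1| |x₀ - a k| ^ 2 := by
  set δ := Real.sqrt (4 - 6 / ((m : ℝ) + 2))
  have hspan : (k - 1 : ℕ) • δ ≤ a k - a 1 := by
    have := nsmul_le_sub_of_le_sub_succ a δ 1 (k - 1) fun j hj hjk => hgap j hj (by omega)
    rwa [show 1 + (k - 1) = k by omega] at this
  have hmk : ((m : ℝ) + 1) * δ ≤ (k - 1 : ℕ) • δ := by
    rw [nsmul_eq_mul]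
    gcongr
    exact_mod_cast (by omega : m + 1 ≤ k - 1)
  have hbound := le_sq_sub_sq_of_mul_sqrt_le m _ m.cast_nonneg
    (hmk.trans (hspan.trans (sub_le_two_mul_max_abs_sub x₀ (a 1) (a k))))
  have hpos : (0 : ℝ) < ((m : ℝ) ^ 2 + 4 * m + 1) / (2 * m + 4) := by positivity
  exact ⟨hbound, by linarith⟩

theorem stmt_18 (m k : ℕ) (hm : 1 ≤ m) (hk : m + 1 < k) (a : ℕ → ℝ)
    (hmono : ∀ i j, 1 ≤ i → i < j → j ≤ k → a i < a j)
    (hgap : ∀ i, 1 ≤ i → i + 1 ≤ k →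
      Real.sqrt (4 - 6 / ((m : ℝ) + 2)) ≤ a (i + 1) - a i)
    (x₀ : ℝ) :
    ((m : ℝ) ^ 2 + 4 * m + 1) / (2 * m + 4) ≤
        max |x₀ - a 1| |x₀ - a k| ^ 2 - (m : ℝ) ^ 2 ∧
      (m : ℝ) ^ 2 < max |x₀ - a 1| |x₀ - a k| ^ 2 :=
  stmt_18_general m k hk a hgap x₀
end
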